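/- arXiv:1612.07960 — 9 statements merged into one kernel-verified Lean document; each statement's English description precedes it below -/
import Mathlib

section
/- Let G be a finite abelian group, let G₁, G₂ ≤ G be subgroups of equal order D, and let F: G₁ × G₂ → ℂˣ be a pairing. Define f: G × G → ℂ by f(μ,ν) = D⁻¹·F(μ,ν) if μ ∈ G₁ and ν ∈ G₂, and f(μ,ν) = 0 otherwise. Then the following four conditions hold simultaneously: (i) for all μ₁, μ₂, ν ∈ G, Σ_{(ν₁,ν₂)∈G×G, ν₁+ν₂=ν} f(μ₁,ν₁)·f(μ₂,ν₂) = f(μ₁,ν) if μ₁ = μ₂ and = 0 otherwise; (ii) for all ν₁, ν₂, μ ∈ G, Σ_{(μ₁,μ₂)∈G×G, μ₁+μ₂=μ} f(μ₁,ν₁)·f(μ₂,ν₂) = f(μ,ν₁) if ν₁ = ν₂ and = 0 otherwise; (iii) for all ν ∈ G, Σ_{μ∈G} f(μ,ν) = 1 if ν = 0 and = 0 otherwise; (iv) for all μ ∈ G, Σ_{ν∈G} f(μ,ν) = 1 if μ = 0 and = 0 otherwise; if and only if F is a perfect pairing. -/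
open Finset

/-!
For `μ ∈ G₁` the map `ν ↦ F μ ν` is a character of `G₂`, so by orthogonality of characters
and `D = |G₂|` the row sum `∑ ν, f μ ν` is `1` if `μ` lies in the left radical and `0`
otherwise; hence (iv) says exactly that the left radical is trivial. Bimultiplicativity gives
`f μ₁ x * f μ₂ (ν - x) = f μ₂ ν * f (μ₁ - μ₂) x`, so the convolution in (i) is `f μ₂ ν` times
the row sum at `μ₁ - μ₂`, which is `[μ₁ = μ₂]` once the left radical is trivial.
Conditions (ii) and (iii) are (i) and (iv) for the transposed pairing.
-/

section

variable {G : Type*} [AddCommGroup G]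

structure IsPairingOn (G₁ G₂ : AddSubgroup G) (F : G → G → ℂˣ) : Prop where
  map_add_left : ∀ μ μ' ν : G, μ ∈ G₁ → μ' ∈ G₁ → ν ∈ G₂ → F (μ + μ') ν = F μ ν * F μ' ν
  map_add_right : ∀ μ ν ν' : G, μ ∈ G₁ → ν ∈ G₂ → ν' ∈ G₂ → F μ (ν + ν') = F μ ν * F μ ν'

lemma map_zero_eq_one_of_map_add {M : Type*} [LeftCancelMonoid M] {H : AddSubgroup G}
    {χ : G → M} (hχ : ∀ a ∈ H, ∀ b ∈ H, χ (a + b) = χ a * χ b) : χ 0 = 1 := by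
  have h := hχ 0 H.zero_mem 0 H.zero_mem
  rwa [add_zero, eq_comm, mul_eq_left] at h

namespace IsPairingOn

variable {G₁ G₂ : AddSubgroup G} {F : G → G → ℂˣ}

lemma flip (hF : IsPairingOn G₁ G₂ F) : IsPairingOn G₂ G₁ (flip F) :=
  ⟨fun ν ν' μ hν hν' hμ => hF.map_add_right μ ν ν' hμ hν hν',
    fun ν μ μ' hν hμ hμ' => hF.map_add_left μ μ' ν hμ hμ' hν⟩

lemma map_zero_left (hF : IsPairingOn G₁ G₂ F) {ν : G} (hν : ν ∈ G₂) : F 0 ν = 1 :=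
  map_zero_eq_one_of_map_add (χ := (F · ν)) fun _ ha _ hb => hF.map_add_left _ _ ν ha hb hν

lemma mul_eq_mul_sub (hF : IsPairingOn G₁ G₂ F) {μ₁ μ₂ ν₁ ν₂ : G} (hμ₁ : μ₁ ∈ G₁)
    (hμ₂ : μ₂ ∈ G₁) (hν₁ : ν₁ ∈ G₂) (hν₂ : ν₂ ∈ G₂) :
    F μ₁ ν₁ * F μ₂ ν₂ = F μ₂ (ν₁ + ν₂) * F (μ₁ - μ₂) ν₁ := by
  have h := hF.map_add_left (μ₁ - μ₂) μ₂ ν₁ (G₁.sub_mem hμ₁ hμ₂) hμ₂ hν₁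
  rw [sub_add_cancel] at h
  rw [h, hF.map_add_right μ₂ ν₁ ν₂ hμ₂ hν₁ hν₂]
  exact mul_rotate _ _ _

end IsPairingOn

variable {G₁ G₂ : AddSubgroup G} [DecidablePred (· ∈ G₁)] [DecidablePred (· ∈ G₂)] {D : ℕ}
  {F : G → G → ℂˣ} {f : G → G → ℂ}

variable (G₁ G₂ D F f) in
def IsNormalizedKernel : Prop :=
  ∀ μ ν, f μ ν = if μ ∈ G₁ ∧ ν ∈ G₂ then (D : ℂ)⁻¹ * F μ ν else 0

namespace IsNormalizedKernel

lemma flip (hf : IsNormalizedKernel G₁ G₂ D F f) :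
    IsNormalizedKernel G₂ G₁ D (flip F) (flip f) :=
  fun ν μ => (hf μ ν).trans (by simp only [and_comm]; rfl)

lemma apply_of_not_mem_left (hf : IsNormalizedKernel G₁ G₂ D F f) {μ : G} (hμ : μ ∉ G₁)
    (ν : G) : f μ ν = 0 := by
  simp [hf μ ν, hμ]

lemma apply_mul_apply_sub (hf : IsNormalizedKernel G₁ G₂ D F f) (hF : IsPairingOn G₁ G₂ F)
    {μ₁ μ₂ : G} (hμ₁ : μ₁ ∈ G₁) (hμ₂ : μ₂ ∈ G₁) (ν x : G) :
    f μ₁ x * f μ₂ (ν - x) = f μ₂ ν * f (μ₁ - μ₂) x := by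
  by_cases hx : x ∈ G₂
  · by_cases hν : ν ∈ G₂
    · have h := congrArg Units.val <|
        hF.mul_eq_mul_sub hμ₁ hμ₂ hx (G₂.sub_mem hν hx)
      rw [add_sub_cancel, Units.val_mul, Units.val_mul] at h
      simp only [hf _ _, hμ₁, hμ₂, hx, hν, G₂.sub_mem hν hx, G₁.sub_mem hμ₁ hμ₂, and_self,
        if_true]
      linear_combination (D : ℂ)⁻¹ * (D : ℂ)⁻¹ * h
    · have : ν - x ∉ G₂ := fun h => hν (by simpa using G₂.add_mem h hx)
      simp [hf _ _, hν, this]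
  · simp [hf _ _, hx]

end IsNormalizedKernel

variable [Fintype G]

lemma sum_ite_mem_eq_ite {H : AddSubgroup G} [DecidablePred (· ∈ H)] {χ : G → ℂˣ}
    (hχ : ∀ a ∈ H, ∀ b ∈ H, χ (a + b) = χ a * χ b) :
    ∑ x, (if x ∈ H then (χ x : ℂ) else 0) =
      if ∀ x ∈ H, χ x = 1 then (Nat.card H : ℂ) else 0 := by
  let ψ : AddChar H ℂ :=
    { toFun := fun x => χ x
      map_zero_eq_one' := by simp [map_zero_eq_one_of_map_add hχ]
      map_add_eq_mul' := fun a b => by simp [hχ a a.2 b b.2] }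
  have hψ : ψ = 0 ↔ ∀ x ∈ H, χ x = 1 := by
    simp [AddChar.eq_zero_iff, ψ, Units.val_eq_one]
  calc ∑ x, (if x ∈ H then (χ x : ℂ) else 0) = ∑ x : H, ψ x := by
        rw [← sum_filter]; exact sum_subtype _ (by simp) _
    _ = _ := by classical rw [ψ.sum_eq_ite]; simp [hψ, Nat.card_eq_fintype_card]

lemma sum_filter_add_eq_sum_sub {β : Type*} [AddCommMonoid β] [DecidableEq G]
    (g : G → G → β) (ν : G) :
    ∑ p ∈ univ.filter (fun p : G × G => p.1 + p.2 = ν), g p.1 p.2 = ∑ x, g x (ν - x) := by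
  simp [sum_filter, Fintype.sum_prod_type, ← eq_sub_iff_add_eq']

namespace IsNormalizedKernel

lemma sum_right_of_mem (hf : IsNormalizedKernel G₁ G₂ D F f) (hF : IsPairingOn G₁ G₂ F)
    (hD : Nat.card G₂ = D) {μ : G} (hμ : μ ∈ G₁) :
    ∑ ν, f μ ν = if ∀ ν ∈ G₂, F μ ν = 1 then 1 else 0 := by
  have hD0 : (D : ℂ) ≠ 0 := hD ▸ Nat.cast_ne_zero.2 Nat.card_pos.ne'
  have h : ∀ ν, f μ ν = (D : ℂ)⁻¹ * if ν ∈ G₂ then (F μ ν : ℂ) else 0 := by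
    simp [hf _ _, hμ, mul_ite]
  rw [sum_congr rfl fun ν _ => h ν, ← mul_sum,
    sum_ite_mem_eq_ite fun _ ha _ hb => hF.map_add_right μ _ _ hμ ha hb, hD]
  split_ifs <;> simp [hD0]

lemma sum_right_eq_ite_iff [DecidableEq G] (hf : IsNormalizedKernel G₁ G₂ D F f)
    (hF : IsPairingOn G₁ G₂ F) (hD : Nat.card G₂ = D) :
    (∀ μ, ∑ ν, f μ ν = if μ = 0 then 1 else 0) ↔
      ∀ μ ∈ G₁, (∀ ν ∈ G₂, F μ ν = 1) → μ = 0 := by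
  constructor
  · intro h μ hμ htriv
    have h1 := h μ
    rw [hf.sum_right_of_mem hF hD hμ, if_pos htriv] at h1
    by_contra hμ0
    simp [hμ0] at h1
  · intro h μ
    by_cases hμ : μ ∈ G₁
    · rw [hf.sum_right_of_mem hF hD hμ]
      refine if_congr ⟨h μ hμ, ?_⟩ rfl rfl
      rintro rfl ν hν
      exact hF.map_zero_left hν
    · have hμ0 : μ ≠ 0 := by rintro rfl; exact hμ G₁.zero_mem
      simp [hf.apply_of_not_mem_left hμ, hμ0]

lemma sum_filter_add_mul_eq_ite [DecidableEq G] (hf : IsNormalizedKernel G₁ G₂ D F f)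
    (hF : IsPairingOn G₁ G₂ F) (hD : Nat.card G₂ = D)
    (hrad : ∀ μ ∈ G₁, (∀ ν ∈ G₂, F μ ν = 1) → μ = 0) (μ₁ μ₂ ν : G) :
    ∑ p ∈ univ.filter (fun p : G × G => p.1 + p.2 = ν), f μ₁ p.1 * f μ₂ p.2 =
      if μ₁ = μ₂ then f μ₁ ν else 0 := by
  rw [sum_filter_add_eq_sum_sub (fun x y => f μ₁ x * f μ₂ y)]
  by_cases h : μ₁ ∈ G₁ ∧ μ₂ ∈ G₁
  · have hsub : (∀ x ∈ G₂, F (μ₁ - μ₂) x = 1) ↔ μ₁ = μ₂ :=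
      ⟨fun h' => sub_eq_zero.1 (hrad _ (G₁.sub_mem h.1 h.2) h'),
        by rintro rfl x hx; rw [sub_self]; exact hF.map_zero_left hx⟩
    simp_rw [hf.apply_mul_apply_sub hF h.1 h.2, ← mul_sum,
      hf.sum_right_of_mem hF hD (G₁.sub_mem h.1 h.2), hsub]
    split_ifs with e
    · rw [e, mul_one]
    · rw [mul_zero]
  · have hzero : ∀ x y, f μ₁ x * f μ₂ y = 0 := fun x y => by
      rcases not_and_or.1 h with h | h <;> simp [hf.apply_of_not_mem_left h]
    have hdiag : μ₁ = μ₂ → f μ₁ ν = 0 := by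
      rintro rfl
      exact hf.apply_of_not_mem_left (by simpa using h) ν
    rw [sum_congr rfl fun x _ => hzero x (ν - x), sum_const_zero]
    exact (ite_eq_right_iff.2 hdiag).symm

end IsNormalizedKernel

end

/-- The four quasitriangularity equations for the `R₀`-matrix
coefficient function `f` built from a pairing `F : G₁ × G₂ → ℂˣ` hold
simultaneously iff `F` is a perfect pairing. -/
theorem stmt0 {G : Type*} [AddCommGroup G] [Fintype G] [DecidableEq G]
    (G₁ G₂ : AddSubgroup G) [DecidablePred (· ∈ G₁)] [DecidablePred (· ∈ G₂)]
    (D : ℕ) (hD1 : Nat.card G₁ = D) (hD2 : Nat.card G₂ = D)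
    (F : G → G → ℂˣ)
    (hF1 : ∀ μ μ' ν : G, μ ∈ G₁ → μ' ∈ G₁ → ν ∈ G₂ →
      F (μ + μ') ν = F μ ν * F μ' ν)
    (hF2 : ∀ μ ν ν' : G, μ ∈ G₁ → ν ∈ G₂ → ν' ∈ G₂ →
      F μ (ν + ν') = F μ ν * F μ ν')
    (f : G → G → ℂ)
    (hf : ∀ μ ν : G, f μ ν =
      if μ ∈ G₁ ∧ ν ∈ G₂ then ((D : ℂ))⁻¹ * (F μ ν : ℂ) else 0) :
    ((∀ μ₁ μ₂ ν : G,
        ∑ p ∈ univ.filter (fun p : G × G => p.1 + p.2 = ν),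
          f μ₁ p.1 * f μ₂ p.2 = if μ₁ = μ₂ then f μ₁ ν else 0) ∧
     (∀ ν₁ ν₂ μ : G,
        ∑ p ∈ univ.filter (fun p : G × G => p.1 + p.2 = μ),
          f p.1 ν₁ * f p.2 ν₂ = if ν₁ = ν₂ then f μ ν₁ else 0) ∧
     (∀ ν : G, ∑ μ : G, f μ ν = if ν = 0 then 1 else 0) ∧
     (∀ μ : G, ∑ ν : G, f μ ν = if μ = 0 then 1 else 0)) ↔
    ((∀ μ ∈ G₁, (∀ ν ∈ G₂, F μ ν = 1) → μ = 0) ∧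
     (∀ ν ∈ G₂, (∀ μ ∈ G₁, F μ ν = 1) → ν = 0)) := by
  have hF : IsPairingOn G₁ G₂ F := ⟨hF1, hF2⟩
  have hker : IsNormalizedKernel G₁ G₂ D F f := hf
  constructor
  · rintro ⟨-, -, hcol, hrow⟩
    exact ⟨(hker.sum_right_eq_ite_iff hF hD2).1 hrow,
      (hker.flip.sum_right_eq_ite_iff hF.flip hD1).1 hcol⟩
  · rintro ⟨hleft, hright⟩
    exact ⟨hker.sum_filter_add_mul_eq_ite hF hD2 hleft,
      hker.flip.sum_filter_add_mul_eq_ite hF.flip hD1 hright,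
      (hker.flip.sum_right_eq_ite_iff hF.flip hD1).2 hright,
      (hker.sum_right_eq_ite_iff hF hD2).2 hleft⟩
end

section
/- Let n ≥ 1, let B be a nondegenerate symmetric ℚ-bilinear form on ℚⁿ, let ℓ ≥ 1 be an integer, and write e(x) := exp(2πi·x) for x ∈ ℚ. Let Λ_R ⊆ Λ₁ and Λ_R ⊆ Λ₂ be lattices in ℚⁿ, let Λ' ⊆ Λ_R be a finite-index subgroup of Λ_R, and let g: Λ₁ × Λ₂ → ℂˣ be biadditive and invariant under translation by Λ_R in each argument. Suppose that the assignment (λ + Λ', μ + Λ') ↦ e(−B(λ,μ)/ℓ)·g(λ,μ) is a well-defined map f̂: (Λ₁/Λ') × (Λ₂/Λ') → ℂˣ and that f̂ is a perfect pairing. Then Λ' = {α ∈ Λ_R : B(α,μ) ∈ ℓℤ for all μ ∈ Λ₁} = {α ∈ Λ_R : B(α,μ) ∈ ℓℤ for all μ ∈ Λ₂}. -/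
/-- A lattice in `ℚⁿ`: a subgroup generated by a `ℚ`-basis. -/
def IsLattice {n : ℕ} (L : AddSubgroup (Fin n → ℚ)) : Prop :=
  ∃ b : Module.Basis (Fin n) ℚ (Fin n → ℚ), L = AddSubgroup.closure (Set.range b)

/-- The dual lattice `L^B` of `L` with respect to a bilinear form `B`. -/
def dualLattice {n : ℕ} (B : (Fin n → ℚ) →ₗ[ℚ] (Fin n → ℚ) →ₗ[ℚ] ℚ)
    (L : AddSubgroup (Fin n → ℚ)) : AddSubgroup (Fin n → ℚ) where
  carrier := {x | ∀ y ∈ L, ∃ k : ℤ, B x y = (k : ℚ)}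
  zero_mem' := fun y _ => ⟨0, by simp⟩
  add_mem' := by
    intro a b ha hb y hy
    obtain ⟨k, hk⟩ := ha y hy
    obtain ⟨m, hm⟩ := hb y hy
    exact ⟨k + m, by simp [map_add, hk, hm]⟩
  neg_mem' := by
    intro a ha y hy
    obtain ⟨k, hk⟩ := ha y hy
    exact ⟨-k, by simp [hk]⟩

/-- The lattice `ℓ·L`. -/
def smulLat {n : ℕ} (ℓ : ℕ) (L : AddSubgroup (Fin n → ℚ)) : AddSubgroup (Fin n → ℚ) :=
  L.map (DistribMulAction.toAddMonoidHom (Fin n → ℚ) ((ℓ : ℚ)))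

/-- `e(x) = exp(2πi·x)`. -/
noncomputable def ee (x : ℚ) : ℂ := Complex.exp (2 * Real.pi * Complex.I * (x : ℂ))

/-! Since `g` is biadditive and `ΛR`-periodic, it is trivial on `Λ₁ × ΛR`, so for `α ∈ ΛR` the
pairing `f̂(λ, α)` is just `e(-B(λ,α)/ℓ)`. Well-definedness of `f̂` puts `Λ'` into the right radical
of this restricted pairing, and perfectness gives the converse inclusion; hence `Λ'` is the set of
`α ∈ ΛR` with `B(Λ₁, α) ⊆ ℓℤ`. Transposing `f̂` (and using the symmetry of `B`) gives the
description through `Λ₂`. -/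

lemma ee_eq_one_iff (x : ℚ) : ee x = 1 ↔ ∃ k : ℤ, x = k := by
  have h2πi : (2 * Real.pi * Complex.I : ℂ) ≠ 0 := by simp [Real.pi_ne_zero]
  rw [ee, Complex.exp_eq_one_iff]
  refine exists_congr fun k => ?_
  rw [mul_comm (k : ℂ), mul_right_inj' h2πi]
  exact_mod_cast Iff.rfl

lemma ee_neg_div_eq_one_iff {ℓ : ℚ} (hℓ : ℓ ≠ 0) (q : ℚ) :
    ee (-q / ℓ) = 1 ↔ ∃ k : ℤ, q = ℓ * k := by
  rw [ee_eq_one_iff, ← (Equiv.neg ℤ).exists_congr_right]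
  refine exists_congr fun k => ?_
  rw [div_eq_iff hℓ]
  push_cast [Equiv.neg_apply]
  constructor <;> intro h <;> linarith

lemma eq_one_of_map_add_of_periodic {V G : Type*} [AddGroup V] [Group G]
    {Λ ΛR : AddSubgroup V} {h : V → G}
    (hmul : ∀ μ μ', μ ∈ Λ → μ' ∈ Λ → h (μ + μ') = h μ * h μ')
    (hper : ∀ μ α, μ ∈ Λ → α ∈ ΛR → h (μ + α) = h μ) {α : V} (hα : α ∈ ΛR) :
    h α = 1 := by
  have h0 : h 0 = 1 := by simpa using hmul 0 0 Λ.zero_mem Λ.zero_mem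
  simpa [h0] using hper 0 α Λ.zero_mem hα

section TwistedPairing

variable {V : Type*} [AddCommGroup V] [Module ℚ V]

/-- The paper's `f̂`, before passing to the quotients by `Λ'`. -/
noncomputable def twistedPairing (B : V →ₗ[ℚ] V →ₗ[ℚ] ℚ) (ℓ : ℚ) (g : V → V → ℂˣ)
    (lam μ : V) : ℂ :=
  ee (-(B lam μ) / ℓ) * g lam μ

lemma twistedPairing_eq_one_iff (B : V →ₗ[ℚ] V →ₗ[ℚ] ℚ) {ℓ : ℚ} (hℓ : ℓ ≠ 0)
    {g : V → V → ℂˣ} {lam μ : V} (hg : g lam μ = 1) :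
    twistedPairing B ℓ g lam μ = 1 ↔ ∃ k : ℤ, B lam μ = ℓ * k := by
  rw [twistedPairing, hg, Units.val_one, mul_one, ee_neg_div_eq_one_iff hℓ]

theorem coe_eq_setOf_of_rightRadical_trivial (B : V →ₗ[ℚ] V →ₗ[ℚ] ℚ) {ℓ : ℚ} (hℓ : ℓ ≠ 0)
    {ΛR Λ₁ Λ₂ Λ' : AddSubgroup V} (hsub₂ : ΛR ≤ Λ₂) (hsub' : Λ' ≤ ΛR) (g : V → V → ℂˣ)
    (hg : ∀ lam μ μ', lam ∈ Λ₁ → μ ∈ Λ₂ → μ' ∈ Λ₂ → g lam (μ + μ') = g lam μ * g lam μ')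
    (hginv : ∀ lam μ α, lam ∈ Λ₁ → μ ∈ Λ₂ → α ∈ ΛR → g lam (μ + α) = g lam μ)
    (hwell : ∀ lam μ α, lam ∈ Λ₁ → μ ∈ Λ₂ → α ∈ Λ' →
      twistedPairing B ℓ g lam (μ + α) = twistedPairing B ℓ g lam μ)
    (hperf : ∀ μ ∈ Λ₂, (∀ lam ∈ Λ₁, twistedPairing B ℓ g lam μ = 1) → μ ∈ Λ') :
    (Λ' : Set V) = {α | α ∈ ΛR ∧ ∀ lam ∈ Λ₁, ∃ k : ℤ, B lam α = ℓ * k} := by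
  have hg_one : ∀ lam ∈ Λ₁, ∀ α ∈ ΛR, g lam α = 1 := fun lam hlam α hα =>
    eq_one_of_map_add_of_periodic (hg lam · · hlam) (hginv lam · · hlam) hα
  ext α
  refine ⟨fun hα => ⟨hsub' hα, fun lam hlam => ?_⟩,
    fun ⟨hαR, hdvd⟩ => hperf α (hsub₂ hαR) fun lam hlam => ?_⟩
  · rw [← twistedPairing_eq_one_iff B hℓ (hg_one lam hlam α (hsub' hα))]
    have hzero : twistedPairing B ℓ g lam 0 = 1 :=
      (twistedPairing_eq_one_iff B hℓ (hg_one lam hlam 0 ΛR.zero_mem)).2 ⟨0, by simp⟩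
    simpa [hzero] using hwell lam 0 α hlam Λ₂.zero_mem hα
  · exact (twistedPairing_eq_one_iff B hℓ (hg_one lam hlam α hαR)).2 (hdvd lam hlam)

end TwistedPairing

theorem stmt1_general {n : ℕ}
    (B : (Fin n → ℚ) →ₗ[ℚ] (Fin n → ℚ) →ₗ[ℚ] ℚ)
    (hBsymm : ∀ x y, B x y = B y x)
    (ℓ : ℕ) (hℓ : 1 ≤ ℓ)
    (ΛR Λ₁ Λ₂ Λ' : AddSubgroup (Fin n → ℚ))
    (hsub₁ : ΛR ≤ Λ₁) (hsub₂ : ΛR ≤ Λ₂) (hsub' : Λ' ≤ ΛR)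
    (g : (Fin n → ℚ) → (Fin n → ℚ) → ℂˣ)
    (hg1 : ∀ lam lam' μ, lam ∈ Λ₁ → lam' ∈ Λ₁ → μ ∈ Λ₂ →
      g (lam + lam') μ = g lam μ * g lam' μ)
    (hg2 : ∀ lam μ μ', lam ∈ Λ₁ → μ ∈ Λ₂ → μ' ∈ Λ₂ →
      g lam (μ + μ') = g lam μ * g lam μ')
    (hginv1 : ∀ lam μ α, lam ∈ Λ₁ → μ ∈ Λ₂ → α ∈ ΛR → g (lam + α) μ = g lam μ)
    (hginv2 : ∀ lam μ α, lam ∈ Λ₁ → μ ∈ Λ₂ → α ∈ ΛR → g lam (μ + α) = g lam μ)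
    -- well-definedness of `f̂` on `(Λ₁/Λ') × (Λ₂/Λ')`:
    (hwell : ∀ lam μ α, lam ∈ Λ₁ → μ ∈ Λ₂ → α ∈ Λ' →
      (ee (-(B (lam + α) μ) / ℓ) * (g (lam + α) μ : ℂ)
          = ee (-(B lam μ) / ℓ) * (g lam μ : ℂ)) ∧
      (ee (-(B lam (μ + α)) / ℓ) * (g lam (μ + α) : ℂ)
          = ee (-(B lam μ) / ℓ) * (g lam μ : ℂ)))
    -- perfectness of `f̂`: both radicals are trivial in the quotients:
    (hperfL : ∀ lam ∈ Λ₁, (∀ μ ∈ Λ₂, ee (-(B lam μ) / ℓ) * (g lam μ : ℂ) = 1) →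
        lam ∈ Λ')
    (hperfR : ∀ μ ∈ Λ₂, (∀ lam ∈ Λ₁, ee (-(B lam μ) / ℓ) * (g lam μ : ℂ) = 1) →
        μ ∈ Λ') :
    (Λ' : Set (Fin n → ℚ))
        = {α | α ∈ ΛR ∧ ∀ μ ∈ Λ₁, ∃ k : ℤ, B α μ = (ℓ : ℚ) * (k : ℚ)} ∧
    (Λ' : Set (Fin n → ℚ))
        = {α | α ∈ ΛR ∧ ∀ μ ∈ Λ₂, ∃ k : ℤ, B α μ = (ℓ : ℚ) * (k : ℚ)} := by
  have hℓ0 : (ℓ : ℚ) ≠ 0 := Nat.cast_ne_zero.2 (by omega)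
  have hBflip : B.flip = B := LinearMap.ext₂ fun x y => hBsymm y x
  constructor
  · rw [← hBflip]
    exact coe_eq_setOf_of_rightRadical_trivial B hℓ0 hsub₂ hsub' g hg2 hginv2
      (fun lam μ α hlam hμ hα => (hwell lam μ α hlam hμ hα).2) hperfR
  · exact coe_eq_setOf_of_rightRadical_trivial B.flip hℓ0 hsub₁ hsub' (fun μ lam => g lam μ)
      (fun μ lam lam' hμ hlam hlam' => hg1 lam lam' μ hlam hlam' hμ)
      (fun μ lam α hμ hlam hα => hginv1 lam μ α hlam hμ hα)
      (fun μ lam α hμ hlam hα => (hwell lam μ α hlam hμ hα).1) hperfL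

/-- if `f̂(λ+Λ',μ+Λ') = e(−B(λ,μ)/ℓ)·g(λ,μ)` is a well-defined
perfect pairing `(Λ₁/Λ') × (Λ₂/Λ') → ℂˣ`, then
`Λ' = {α ∈ Λ_R : B(α,μ) ∈ ℓℤ ∀ μ ∈ Λ₁} = {α ∈ Λ_R : B(α,μ) ∈ ℓℤ ∀ μ ∈ Λ₂}`.
Well-definedness and perfectness are stated element-wise (a radical being
trivial in the quotient means it is contained in `Λ'`). -/
theorem stmt1 {n : ℕ} (hn : 1 ≤ n)
    (B : (Fin n → ℚ) →ₗ[ℚ] (Fin n → ℚ) →ₗ[ℚ] ℚ)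
    (hBsymm : ∀ x y, B x y = B y x)
    (hBnd : ∀ x, (∀ y, B x y = 0) → x = 0)
    (ℓ : ℕ) (hℓ : 1 ≤ ℓ)
    (ΛR Λ₁ Λ₂ Λ' : AddSubgroup (Fin n → ℚ))
    (hΛR : IsLattice ΛR) (hΛ₁ : IsLattice Λ₁) (hΛ₂ : IsLattice Λ₂)
    (hsub₁ : ΛR ≤ Λ₁) (hsub₂ : ΛR ≤ Λ₂) (hsub' : Λ' ≤ ΛR)
    (hfin : Finite (ΛR ⧸ Λ'.addSubgroupOf ΛR))
    (g : (Fin n → ℚ) → (Fin n → ℚ) → ℂˣ)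
    (hg1 : ∀ lam lam' μ, lam ∈ Λ₁ → lam' ∈ Λ₁ → μ ∈ Λ₂ →
      g (lam + lam') μ = g lam μ * g lam' μ)
    (hg2 : ∀ lam μ μ', lam ∈ Λ₁ → μ ∈ Λ₂ → μ' ∈ Λ₂ →
      g lam (μ + μ') = g lam μ * g lam μ')
    (hginv1 : ∀ lam μ α, lam ∈ Λ₁ → μ ∈ Λ₂ → α ∈ ΛR → g (lam + α) μ = g lam μ)
    (hginv2 : ∀ lam μ α, lam ∈ Λ₁ → μ ∈ Λ₂ → α ∈ ΛR → g lam (μ + α) = g lam μ)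
    -- well-definedness of `f̂` on `(Λ₁/Λ') × (Λ₂/Λ')`:
    (hwell : ∀ lam μ α, lam ∈ Λ₁ → μ ∈ Λ₂ → α ∈ Λ' →
      (ee (-(B (lam + α) μ) / ℓ) * (g (lam + α) μ : ℂ)
          = ee (-(B lam μ) / ℓ) * (g lam μ : ℂ)) ∧
      (ee (-(B lam (μ + α)) / ℓ) * (g lam (μ + α) : ℂ)
          = ee (-(B lam μ) / ℓ) * (g lam μ : ℂ)))
    -- perfectness of `f̂`: both radicals are trivial in the quotients:
    (hperfL : ∀ lam ∈ Λ₁, (∀ μ ∈ Λ₂, ee (-(B lam μ) / ℓ) * (g lam μ : ℂ) = 1) →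
        lam ∈ Λ')
    (hperfR : ∀ μ ∈ Λ₂, (∀ lam ∈ Λ₁, ee (-(B lam μ) / ℓ) * (g lam μ : ℂ) = 1) →
        μ ∈ Λ') :
    (Λ' : Set (Fin n → ℚ))
        = {α | α ∈ ΛR ∧ ∀ μ ∈ Λ₁, ∃ k : ℤ, B α μ = (ℓ : ℚ) * (k : ℚ)} ∧
    (Λ' : Set (Fin n → ℚ))
        = {α | α ∈ ΛR ∧ ∀ μ ∈ Λ₂, ∃ k : ℤ, B α μ = (ℓ : ℚ) * (k : ℚ)} :=
  stmt1_general B hBsymm ℓ hℓ ΛR Λ₁ Λ₂ Λ' hsub₁ hsub₂ hsub' g hg1 hg2 hginv1 hginv2 hwell hperfL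
    hperfR
end

section
/- Let n ≥ 1, let B be a nondegenerate symmetric ℚ-bilinear form on ℚⁿ, and let Λ_R ⊆ Λ be lattices in ℚⁿ with B(λ,α) ∈ ℤ for all λ ∈ Λ and α ∈ Λ_R (so that Λ_R ⊆ Λ ⊆ Λ_R^B). Let ℓ ≥ 1 be an integer with gcd(ℓ, [Λ_R^B : Λ]) = 1. Then ℓ·Λ = Λ ∩ ℓ·Λ_R^B and ℓ·Λ_R = Λ_R ∩ ℓ·Λ^B; in other words, multiplication by ℓ is a centralizer transfer map. -/
/-! Write `D = Λ_R^B` and `m = [D : Λ]`. Both identities have the shape `ℓ·L = L ∩ ℓ·M` for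
lattices `L ⊆ M` with `m·M ⊆ L`, which holds because `ℓ·y, m·y ∈ L` force `y ∈ L` by Bézout.
For `(L, M) = (Λ, D)` the hypothesis `m·D ⊆ Λ` is Lagrange's theorem. Dualizing it gives
`m·Λ^B ⊆ D^B`, and `D^B = Λ_R` because a lattice is its own double dual under a nondegenerate
symmetric form, so the pair `(Λ_R, Λ^B)` qualifies as well. -/

open LinearMap (BilinForm)

theorem AddSubgroup.mem_of_nsmul_mem_of_coprime {G : Type*} [AddCommGroup G] (H : AddSubgroup G)
    {a b : ℕ} (hab : a.Coprime b) {x : G} (ha : a • x ∈ H) (hb : b • x ∈ H) : x ∈ H := by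
  obtain ⟨u, v, huv⟩ := Nat.isCoprime_iff_coprime.mpr hab
  have hx : x = u • (a • x) + v • (b • x) := by
    rw [← natCast_zsmul, ← natCast_zsmul, smul_smul, smul_smul, ← add_zsmul, huv, one_zsmul]
  rw [hx]
  exact H.add_mem (H.zsmul_mem ha u) (H.zsmul_mem hb v)

section

variable {n : ℕ}

theorem mem_smulLat {ℓ : ℕ} {L : AddSubgroup (Fin n → ℚ)} {x : Fin n → ℚ} :
    x ∈ smulLat ℓ L ↔ ∃ y ∈ L, ℓ • y = x := by
  simp [smulLat, Nat.cast_smul_eq_nsmul]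

theorem smulLat_le_self (ℓ : ℕ) (L : AddSubgroup (Fin n → ℚ)) : smulLat ℓ L ≤ L := by
  rintro _ ⟨y, hy, rfl⟩
  exact L.nsmul_mem hy ℓ

theorem smulLat_mono (ℓ : ℕ) {L M : AddSubgroup (Fin n → ℚ)} (h : L ≤ M) :
    smulLat ℓ L ≤ smulLat ℓ M :=
  AddSubgroup.map_mono h

theorem smulLat_eq_inf_of_coprime {ℓ m : ℕ} {L M : AddSubgroup (Fin n → ℚ)} (hLM : L ≤ M)
    (hm : ∀ z ∈ M, m • z ∈ L) (hcop : ℓ.Coprime m) :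
    smulLat ℓ L = L ⊓ smulLat ℓ M := by
  refine le_antisymm (le_inf (smulLat_le_self ℓ L) (smulLat_mono ℓ hLM)) ?_
  rintro _ ⟨hxL, hxM⟩
  obtain ⟨y, hyM, rfl⟩ := mem_smulLat.mp hxM
  exact mem_smulLat.mpr ⟨y, L.mem_of_nsmul_mem_of_coprime hcop hxL (hm y hyM), rfl⟩

variable (B : (Fin n → ℚ) →ₗ[ℚ] (Fin n → ℚ) →ₗ[ℚ] ℚ)

theorem le_dualLattice_comm (hBsymm : ∀ x y, B x y = B y x) {L M : AddSubgroup (Fin n → ℚ)} :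
    L ≤ dualLattice B M ↔ M ≤ dualLattice B L := by
  suffices ∀ L M : AddSubgroup (Fin n → ℚ), L ≤ dualLattice B M → M ≤ dualLattice B L from
    ⟨this L M, this M L⟩
  intro L M h y hy x hx
  rw [hBsymm]
  exact h hx y hy

theorem nsmul_mem_dualLattice {L M : AddSubgroup (Fin n → ℚ)} {m : ℕ}
    (hm : ∀ z ∈ M, m • z ∈ L) {y : Fin n → ℚ} (hy : y ∈ dualLattice B L) :
    m • y ∈ dualLattice B M := fun z hz => by
  rw [map_nsmul, LinearMap.smul_apply, ← map_nsmul]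
  exact hy _ (hm z hz)

theorem toIntSubmodule_dualLattice (L : AddSubgroup (Fin n → ℚ)) :
    (dualLattice B L).toIntSubmodule = BilinForm.dualSubmodule B L.toIntSubmodule := by
  ext x
  change (∀ y ∈ L, ∃ k : ℤ, B x y = k) ↔ ∀ y ∈ L, B x y ∈ (1 : Submodule ℤ ℚ)
  simp only [Submodule.mem_one, algebraMap_int_eq, eq_intCast, eq_comm]

theorem dualLattice_dualLattice (hBsymm : ∀ x y, B x y = B y x)
    (hBnd : ∀ x, (∀ y, B x y = 0) → x = 0) {L : AddSubgroup (Fin n → ℚ)} (hL : IsLattice L) :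
    dualLattice B (dualLattice B L) = L := by
  obtain ⟨b, rfl⟩ := hL
  have hB : B.Nondegenerate := ⟨hBnd, fun y hy => hBnd y fun x => hBsymm y x ▸ hy x⟩
  apply AddSubgroup.toIntSubmodule.injective
  rw [toIntSubmodule_dualLattice, toIntSubmodule_dualLattice, AddSubgroup.toIntSubmodule_closure]
  exact BilinForm.dualSubmodule_dualSubmodule_of_basis B hB (BilinForm.isSymm_def.mpr hBsymm) b

end

theorem stmt2_general {n : ℕ}
    (B : (Fin n → ℚ) →ₗ[ℚ] (Fin n → ℚ) →ₗ[ℚ] ℚ)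
    (hBsymm : ∀ x y, B x y = B y x)
    (hBnd : ∀ x, (∀ y, B x y = 0) → x = 0)
    (ΛR Λ : AddSubgroup (Fin n → ℚ))
    (hΛR : IsLattice ΛR)
    (hint : ∀ lam ∈ Λ, ∀ α ∈ ΛR, ∃ k : ℤ, B lam α = (k : ℚ))
    (ℓ : ℕ)
    (hcop : Nat.Coprime ℓ (Λ.relIndex (dualLattice B ΛR))) :
    smulLat ℓ Λ = Λ ⊓ smulLat ℓ (dualLattice B ΛR) ∧
    smulLat ℓ ΛR = ΛR ⊓ smulLat ℓ (dualLattice B Λ) := by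
  have hΛ_le : Λ ≤ dualLattice B ΛR := hint
  have hindex : ∀ z ∈ dualLattice B ΛR, Λ.relIndex (dualLattice B ΛR) • z ∈ Λ :=
    fun z hz => Λ.nsmul_relIndex_mem hz
  refine ⟨smulLat_eq_inf_of_coprime hΛ_le hindex hcop,
    smulLat_eq_inf_of_coprime ((le_dualLattice_comm B hBsymm).mp hΛ_le) (fun y hy => ?_) hcop⟩
  simpa only [dualLattice_dualLattice B hBsymm hBnd hΛR] using
    nsmul_mem_dualLattice B hindex hy

/-- if `gcd(ℓ, [Λ_R^B : Λ]) = 1` then multiplication by `ℓ` is a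
centralizer transfer map: `ℓ·Λ = Λ ∩ ℓ·Λ_R^B` and `ℓ·Λ_R = Λ_R ∩ ℓ·Λ^B`. -/
theorem stmt2 {n : ℕ} (hn : 1 ≤ n)
    (B : (Fin n → ℚ) →ₗ[ℚ] (Fin n → ℚ) →ₗ[ℚ] ℚ)
    (hBsymm : ∀ x y, B x y = B y x)
    (hBnd : ∀ x, (∀ y, B x y = 0) → x = 0)
    (ΛR Λ : AddSubgroup (Fin n → ℚ))
    (hΛR : IsLattice ΛR) (hΛ : IsLattice Λ) (hsub : ΛR ≤ Λ)
    (hint : ∀ lam ∈ Λ, ∀ α ∈ ΛR, ∃ k : ℤ, B lam α = (k : ℚ))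
    (ℓ : ℕ) (hℓ : 1 ≤ ℓ)
    (hcop : Nat.Coprime ℓ (Λ.relIndex (dualLattice B ΛR))) :
    smulLat ℓ Λ = Λ ⊓ smulLat ℓ (dualLattice B ΛR) ∧
    smulLat ℓ ΛR = ΛR ⊓ smulLat ℓ (dualLattice B Λ) :=
  stmt2_general B hBsymm hBnd ΛR Λ hΛR hint ℓ hcop
end

section
/- Let G be a finite abelian group, let N ≤ G be a subgroup such that G/N is cyclic, and let σ: G × G → ℂˣ be a symmetric bicharacter (multiplicative in each argument with σ(μ,ν) = σ(ν,μ)). Suppose f: G × G → ℂ satisfies: (0) f(μ+α,ν) = σ(α,ν)·f(μ,ν) and f(μ,ν+α) = σ(μ,α)·f(μ,ν) for all μ,ν ∈ G and α ∈ N; (i) Σ_{ν₁+ν₂=ν} f(μ₁,ν₁)·f(μ₂,ν₂) = δ_{μ₁,μ₂}·f(μ₁,ν) for all μ₁,μ₂,ν ∈ G; (ii) Σ_{μ₁+μ₂=μ} f(μ₁,ν₁)·f(μ₂,ν₂) = δ_{ν₁,ν₂}·f(μ,ν₁) for all ν₁,ν₂,μ ∈ G; (iii) Σ_{μ∈G}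 f(μ,ν) = δ_{ν,0}; (iv) Σ_{ν∈G} f(μ,ν) = δ_{μ,0}. Then there exist subgroups G₁, G₂ ≤ G containing N with |G₁| = |G₂| =: D and a map h: G₁ × G₂ → ℂˣ which is multiplicative in each argument and invariant under translation by N in each argument, such that f(μ,ν) = D⁻¹·σ(μ,ν)·h(μ,ν) for all (μ,ν) ∈ G₁ × G₂ and f(μ,ν) = 0 whenever (μ,ν) ∉ G₁ × G₂. -/
open Finset

lemma exists_indicator {G : Type*} [Fintype G] [DecidableEq G] (v : G → ℂ)
    (hv : ∀ a b, v a * v b = if a = b then v a else 0) (hs : ∑ a, v a = 1) :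
    ∃ a₀, ∀ a, v a = if a = a₀ then 1 else 0 := by
  have hex : ∃ a, v a ≠ 0 := by
    by_contra h
    push_neg at h
    rw [Finset.sum_eq_zero (fun a _ => h a)] at hs
    exact one_ne_zero hs.symm
  obtain ⟨a₀, h₀⟩ := hex
  have h1 : v a₀ = 1 := by
    have h := hv a₀ a₀
    rw [if_pos rfl] at h
    exact mul_right_cancel₀ h₀ (h.trans (one_mul (v a₀)).symm)
  refine ⟨a₀, fun a => ?_⟩
  by_cases hae : a = a₀
  · simp [hae, h1]
  · have h := hv a a₀
    rw [if_neg hae, h1, mul_one] at h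
    simp [hae, h]

lemma conv_transform {G : Type*} [AddCommGroup G] [Fintype G] [DecidableEq G]
    (F₁ F₂ c : G → ℂ) (χ : AddChar G ℂ)
    (hconv : ∀ ν, ∑ p ∈ univ.filter (fun p : G × G => p.1 + p.2 = ν),
       F₁ p.1 * F₂ p.2 = c ν) :
    (∑ ν, F₁ ν * χ ν) * (∑ ν, F₂ ν * χ ν) = ∑ ν, c ν * χ ν := by
  calc (∑ ν, F₁ ν * χ ν) * (∑ ν, F₂ ν * χ ν)
      = ∑ p : G × G, F₁ p.1 * F₂ p.2 * χ (p.1 + p.2) := by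
        rw [Fintype.sum_mul_sum, Fintype.sum_prod_type]
        exact Finset.sum_congr rfl fun ν₁ _ => Finset.sum_congr rfl fun ν₂ _ => by
          rw [AddChar.map_add_eq_mul]; ring
    _ = ∑ ν, ∑ p ∈ univ.filter (fun p : G × G => p.1 + p.2 = ν),
          F₁ p.1 * F₂ p.2 * χ (p.1 + p.2) :=
        (Finset.sum_fiberwise _ _ _).symm
    _ = ∑ ν, c ν * χ ν := Finset.sum_congr rfl fun ν _ => by
        rw [← hconv ν, Finset.sum_mul]
        exact Finset.sum_congr rfl fun p hp => by
          rw [Finset.mem_filter] at hp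
          rw [hp.2]

/-- any solution `f` of the `R₀`-matrix equations, twisted by a
symmetric bicharacter `σ` relative to a subgroup `N` with cyclic quotient, is
supported on a product `G₁ × G₂` of subgroups containing `N` of equal order
`D`, where it equals `D⁻¹·σ·h` for a pairing `h` descending to
`(G₁/N) × (G₂/N)`. -/
theorem stmt7 {G : Type*} [AddCommGroup G] [Fintype G] [DecidableEq G]
    (N : AddSubgroup G) (hcyc : IsAddCyclic (G ⧸ N))
    (σ : G → G → ℂˣ)
    (hσ1 : ∀ μ μ' ν : G, σ (μ + μ') ν = σ μ ν * σ μ' ν)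
    (hσ2 : ∀ μ ν ν' : G, σ μ (ν + ν') = σ μ ν * σ μ ν')
    (hσsymm : ∀ μ ν : G, σ μ ν = σ ν μ)
    (f : G → G → ℂ)
    (h0a : ∀ μ ν : G, ∀ α ∈ N, f (μ + α) ν = (σ α ν : ℂ) * f μ ν)
    (h0b : ∀ μ ν : G, ∀ α ∈ N, f μ (ν + α) = (σ μ α : ℂ) * f μ ν)
    (h1 : ∀ μ₁ μ₂ ν : G,
      ∑ p ∈ univ.filter (fun p : G × G => p.1 + p.2 = ν),
        f μ₁ p.1 * f μ₂ p.2 = if μ₁ = μ₂ then f μ₁ ν else 0)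
    (h2 : ∀ ν₁ ν₂ μ : G,
      ∑ p ∈ univ.filter (fun p : G × G => p.1 + p.2 = μ),
        f p.1 ν₁ * f p.2 ν₂ = if ν₁ = ν₂ then f μ ν₁ else 0)
    (h3 : ∀ ν : G, ∑ μ : G, f μ ν = if ν = 0 then 1 else 0)
    (h4 : ∀ μ : G, ∑ ν : G, f μ ν = if μ = 0 then 1 else 0) :
    ∃ (G₁ G₂ : AddSubgroup G) (h : G → G → ℂˣ),
      N ≤ G₁ ∧ N ≤ G₂ ∧ Nat.card G₁ = Nat.card G₂ ∧
      (∀ μ μ' ν : G, μ ∈ G₁ → μ' ∈ G₁ → ν ∈ G₂ →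
        h (μ + μ') ν = h μ ν * h μ' ν) ∧
      (∀ μ ν ν' : G, μ ∈ G₁ → ν ∈ G₂ → ν' ∈ G₂ →
        h μ (ν + ν') = h μ ν * h μ ν') ∧
      (∀ μ ν : G, ∀ α ∈ N, μ ∈ G₁ → ν ∈ G₂ →
        h (μ + α) ν = h μ ν ∧ h μ (ν + α) = h μ ν) ∧
      (∀ μ ν : G, μ ∈ G₁ → ν ∈ G₂ →
        f μ ν = ((Nat.card G₁ : ℂ))⁻¹ * (σ μ ν : ℂ) * (h μ ν : ℂ)) ∧
      (∀ μ ν : G, ¬(μ ∈ G₁ ∧ ν ∈ G₂) → f μ ν = 0) := by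
  classical
  have cardnz : (Fintype.card G : ℂ) ≠ 0 := Nat.cast_ne_zero.2 Fintype.card_ne_zero
  -- Column transforms: indicator structure
  have hMex : ∀ χ : AddChar G ℂ, ∃ μ₀, ∀ μ, (∑ ν, f μ ν * χ ν) = if μ = μ₀ then 1 else 0 := by
    intro χ
    apply exists_indicator (fun μ => ∑ ν, f μ ν * χ ν)
    · intro μ₁ μ₂
      rw [conv_transform (f μ₁) (f μ₂) _ χ (h1 μ₁ μ₂)]
      by_cases hc : μ₁ = μ₂ <;> simp [hc]
    · rw [Finset.sum_comm]
      have : ∀ ν : G, ∑ μ, f μ ν * χ ν = (if ν = 0 then 1 else 0) * χ ν := by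
        intro ν
        rw [← Finset.sum_mul, h3 ν]
      rw [Finset.sum_congr rfl fun ν _ => this ν]
      simp
  choose M hM using hMex
  -- Row transforms
  have hNex : ∀ ψ : AddChar G ℂ, ∃ ν₀, ∀ ν, (∑ μ, f μ ν * ψ μ) = if ν = ν₀ then 1 else 0 := by
    intro ψ
    apply exists_indicator (fun ν => ∑ μ, f μ ν * ψ μ)
    · intro ν₁ ν₂
      rw [conv_transform (fun μ => f μ ν₁) (fun μ => f μ ν₂) _ ψ (h2 ν₁ ν₂)]
      by_cases hc : ν₁ = ν₂ <;> simp [hc]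
    · have : ∀ μ : G, ∑ ν, f μ ν * ψ μ = (if μ = 0 then 1 else 0) * ψ μ := by
        intro μ
        rw [← Finset.sum_mul, h4 μ]
      rw [Finset.sum_comm, Finset.sum_congr rfl fun μ _ => this μ]
      simp
  choose Nu hNu using hNex
  -- Fourier inversion in the second variable
  have hinv : ∀ μ ν : G, ∑ χ : AddChar G ℂ, (∑ ν', f μ ν' * χ ν') * χ (-ν)
      = (Fintype.card G : ℂ) * f μ ν := by
    intro μ ν
    have e1 : ∀ χ : AddChar G ℂ, (∑ ν', f μ ν' * χ ν') * χ (-ν)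
        = ∑ ν', f μ ν' * χ (ν' + -ν) := by
      intro χ
      rw [Finset.sum_mul]
      exact Finset.sum_congr rfl fun ν' _ => by rw [AddChar.map_add_eq_mul]; ring
    rw [Finset.sum_congr rfl fun χ _ => e1 χ, Finset.sum_comm]
    have e2 : ∀ ν' : G, ∑ χ : AddChar G ℂ, f μ ν' * χ (ν' + -ν)
        = if ν' = ν then f μ ν' * (Fintype.card G : ℂ) else 0 := by
      intro ν'
      rw [← Finset.mul_sum, AddChar.sum_apply_eq_ite, mul_ite, mul_zero]
      congr 1
      · rw [add_neg_eq_zero]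
    rw [Finset.sum_congr rfl fun ν' _ => e2 ν']
    rw [Finset.sum_ite_eq' univ ν]
    simp [mul_comm]

  -- the star identity
  have hstar : ∀ (ψ : AddChar G ℂ) (ν : G),
      ∑ χ : AddChar G ℂ, ψ (M χ) * χ (-ν)
        = if ν = Nu ψ then (Fintype.card G : ℂ) else 0 := by
    intro ψ ν
    have e1 : ∀ χ : AddChar G ℂ, ψ (M χ) * χ (-ν)
        = ∑ μ, ((∑ ν', f μ ν' * χ ν') * χ (-ν)) * ψ μ := by
      intro χ
      have : ∀ μ, ((∑ ν', f μ ν' * χ ν') * χ (-ν)) * ψ μ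
          = (if μ = M χ then 1 else 0) * χ (-ν) * ψ μ := by
        intro μ; rw [hM χ μ]
      rw [Finset.sum_congr rfl fun μ _ => this μ]
      simp [ite_mul]
      ring
    rw [Finset.sum_congr rfl fun χ _ => e1 χ, Finset.sum_comm]
    have e2 : ∀ μ : G, ∑ χ : AddChar G ℂ, ((∑ ν', f μ ν' * χ ν') * χ (-ν)) * ψ μ
        = ((Fintype.card G : ℂ) * f μ ν) * ψ μ := by
      intro μ
      rw [← Finset.sum_mul, hinv μ ν]
    rw [Finset.sum_congr rfl fun μ _ => e2 μ]
    have e3 : ∑ μ, ((Fintype.card G : ℂ) * f μ ν) * ψ μ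
        = (Fintype.card G : ℂ) * ∑ μ, f μ ν * ψ μ := by
      rw [Finset.mul_sum]
      exact Finset.sum_congr rfl fun μ _ => by ring
    rw [e3, hNu ψ ν]
    simp
  -- the key adjunction identity
  have hKI : ∀ (χ ψ : AddChar G ℂ), ψ (M χ) = χ (Nu ψ) := by
    intro χ ψ
    have hL : ∑ ν, (∑ χ' : AddChar G ℂ, ψ (M χ') * χ' (-ν)) * χ ν
        = (Fintype.card G : ℂ) * ψ (M χ) := by
      rw [Finset.sum_congr rfl fun ν (_ : ν ∈ univ) => (Finset.sum_mul _ _ _ : _)]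
      rw [Finset.sum_comm]
      have e1 : ∀ χ' : AddChar G ℂ, ∑ ν, (ψ (M χ') * χ' (-ν)) * χ ν
          = ψ (M χ') * ∑ ν, (χ - χ') ν := by
        intro χ'
        rw [Finset.mul_sum]
        exact Finset.sum_congr rfl fun ν _ => by rw [AddChar.sub_apply]; ring
      rw [Finset.sum_congr rfl fun χ' _ => e1 χ']
      have e2 : ∀ χ' : AddChar G ℂ, ψ (M χ') * ∑ ν, (χ - χ') ν
          = if χ' = χ then ψ (M χ') * (Fintype.card G : ℂ) else 0 := by
        intro χ'
        rw [AddChar.sum_eq_ite, mul_ite, mul_zero]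
        congr 1
        rw [sub_eq_zero]
        exact propext eq_comm
      rw [Finset.sum_congr rfl fun χ' _ => e2 χ', Finset.sum_ite_eq' univ χ]
      simp [mul_comm]
    have hR : ∑ ν, (∑ χ' : AddChar G ℂ, ψ (M χ') * χ' (-ν)) * χ ν
        = (Fintype.card G : ℂ) * χ (Nu ψ) := by
      rw [Finset.sum_congr rfl fun ν (_ : ν ∈ univ) => by rw [hstar ψ ν]]
      simp [ite_mul]
    exact mul_left_cancel₀ cardnz (hL.symm.trans hR)
  -- characters separate points
  have hsep : ∀ a b : G, (∀ ψ : AddChar G ℂ, ψ a = ψ b) → a = b := by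
    intro a b hab
    have h5 : ∀ ψ : AddChar G ℂ, ψ (a - b) = 1 := by
      intro ψ
      rw [sub_eq_add_neg, AddChar.map_add_eq_mul, AddChar.map_neg_eq_inv, hab ψ]
      exact mul_inv_cancel₀ ((ψ.val_isUnit b).ne_zero)
    exact sub_eq_zero.1 (AddChar.forall_apply_eq_zero.1 h5)
  -- additivity of M
  have hMadd : ∀ χ₁ χ₂ : AddChar G ℂ, M (χ₁ + χ₂) = M χ₁ + M χ₂ := by
    intro χ₁ χ₂
    apply hsep
    intro ψ
    rw [hKI (χ₁ + χ₂) ψ, AddChar.add_apply, ← hKI χ₁ ψ, ← hKI χ₂ ψ,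
      ← AddChar.map_add_eq_mul]

  -- the range subgroup and the annihilator subgroup
  have hM0 : M 0 = 0 := by
    have := (AddMonoidHom.mk' M hMadd).map_zero
    exact this
  let G₁ : AddSubgroup G := (AddMonoidHom.mk' M hMadd).range
  have hG₁mem : ∀ μ : G, μ ∈ G₁ ↔ ∃ χ : AddChar G ℂ, M χ = μ := by
    intro μ; exact AddMonoidHom.mem_range
  let G₂ : AddSubgroup G :=
    { carrier := {ν | ∀ χ : AddChar G ℂ, M χ = 0 → χ ν = 1}
      zero_mem' := fun χ _ => χ.map_zero_eq_one
      add_mem' := by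
        intro a b ha hb χ hχ
        rw [AddChar.map_add_eq_mul, ha χ hχ, hb χ hχ, one_mul]
      neg_mem' := by
        intro a ha χ hχ
        rw [AddChar.map_neg_eq_inv, ha χ hχ, inv_one] }
  have hG₂mem : ∀ ν : G, ν ∈ G₂ ↔ ∀ χ : AddChar G ℂ, M χ = 0 → χ ν = 1 := by
    intro ν; exact Iff.rfl
  set KS : Finset (AddChar G ℂ) := univ.filter (fun χ => M χ = 0) with hKS
  set KC : ℕ := KS.card with hKC
  have hKCnz : (KC : ℂ) ≠ 0 := by
    refine Nat.cast_ne_zero.2 (Finset.card_ne_zero_of_mem (a := 0) ?_)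
    rw [hKS, Finset.mem_filter]
    exact ⟨Finset.mem_univ _, hM0⟩
  -- fiber decomposition
  have hfiber : ∀ (χ₀ : AddChar G ℂ) (ν : G),
      (Fintype.card G : ℂ) * f (M χ₀) ν = χ₀ (-ν) * ∑ κ ∈ KS, κ (-ν) := by
    intro χ₀ ν
    rw [← hinv (M χ₀) ν]
    have e1 : ∀ χ : AddChar G ℂ, (∑ ν', f (M χ₀) ν' * χ ν') * χ (-ν)
        = if M χ = M χ₀ then χ (-ν) else 0 := by
      intro χ
      rw [hM χ (M χ₀)]
      by_cases hc : M χ = M χ₀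
      · rw [if_pos hc, if_pos hc.symm, one_mul]
      · rw [if_neg hc, if_neg (fun hh => hc hh.symm), zero_mul]
    rw [Finset.sum_congr rfl fun χ _ => e1 χ]
    have e2 : ∑ χ : AddChar G ℂ, (if M χ = M χ₀ then χ (-ν) else 0)
        = ∑ κ : AddChar G ℂ, (if M κ = 0 then χ₀ (-ν) * κ (-ν) else 0) := by
      refine (Fintype.sum_equiv (Equiv.addLeft χ₀) _ _ fun κ => ?_).symm
      have he : (Equiv.addLeft χ₀) κ = χ₀ + κ := rfl
      rw [he, hMadd, AddChar.add_apply]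
      by_cases hc : M κ = 0
      · rw [if_pos hc, if_pos (by rw [hc, add_zero])]
      · rw [if_neg hc, if_neg (fun hh => hc (by rwa [add_eq_left] at hh))]
    rw [e2, Finset.mul_sum, Finset.sum_filter]

  -- kernel sums
  have hK1 : ∀ ν : G, ν ∈ G₂ → ∑ κ ∈ KS, κ (-ν) = (KC : ℂ) := by
    intro ν hν
    have : ∀ κ ∈ KS, κ (-ν) = 1 := by
      intro κ hκ
      rw [hKS, Finset.mem_filter] at hκ
      rw [AddChar.map_neg_eq_inv, (hG₂mem ν).1 hν κ hκ.2, inv_one]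
    rw [Finset.sum_congr rfl this, Finset.sum_const, hKC]
    simp
  have hK0 : ∀ ν : G, ν ∉ G₂ → ∑ κ ∈ KS, κ (-ν) = 0 := by
    intro ν hν
    rw [hG₂mem] at hν
    push_neg at hν
    obtain ⟨κ₁, hκ₁0, hκ₁ν⟩ := hν
    have hself : ∑ κ ∈ KS, κ (-ν) = κ₁ (-ν) * ∑ κ ∈ KS, κ (-ν) := by
      rw [Finset.mul_sum, Finset.sum_filter, Finset.sum_filter]
      refine (Fintype.sum_equiv (Equiv.addLeft κ₁) _ _ fun κ => ?_).symm
      have he : (Equiv.addLeft κ₁) κ = κ₁ + κ := rfl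
      rw [he, hMadd, hκ₁0, zero_add, AddChar.add_apply]
    have hone : κ₁ (-ν) ≠ 1 := by
      rw [AddChar.map_neg_eq_inv]
      exact fun hh => hκ₁ν (inv_eq_one.1 hh)
    have hz : (κ₁ (-ν) - 1) * ∑ κ ∈ KS, κ (-ν) = 0 := by
      linear_combination -hself
    rcases mul_eq_zero.1 hz with hc | hc
    · exact absurd (sub_eq_zero.1 hc) hone
    · exact hc
  -- support and value lemmas
  have hsupp1 : ∀ μ ν : G, μ ∉ G₁ → f μ ν = 0 := by
    intro μ ν hμ
    have hz : ∑ χ : AddChar G ℂ, (∑ ν', f μ ν' * χ ν') * χ (-ν) = 0 := by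
      refine Finset.sum_eq_zero fun χ _ => ?_
      rw [hM χ μ, if_neg, zero_mul]
      intro hh
      exact hμ ((hG₁mem μ).2 ⟨χ, hh.symm⟩)
    rw [hinv μ ν] at hz
    exact (mul_eq_zero.1 hz).resolve_left cardnz
  have hval : ∀ (χ₀ : AddChar G ℂ) (ν : G), ν ∈ G₂ →
      (Fintype.card G : ℂ) * f (M χ₀) ν = χ₀ (-ν) * (KC : ℂ) := by
    intro χ₀ ν hν
    rw [hfiber χ₀ ν, hK1 ν hν]
  have hsupp2 : ∀ μ ν : G, ν ∉ G₂ → f μ ν = 0 := by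
    intro μ ν hν
    by_cases hμ : μ ∈ G₁
    · obtain ⟨χ₀, hχ₀⟩ := (hG₁mem μ).1 hμ
      have hz := hfiber χ₀ ν
      rw [hχ₀, hK0 ν hν, mul_zero] at hz
      exact (mul_eq_zero.1 hz).resolve_left cardnz
    · exact hsupp1 μ ν hμ
  have hchnz : ∀ (χ : AddChar G ℂ) (a : G), χ a ≠ 0 := fun χ a => (χ.val_isUnit a).ne_zero
  have fnz : ∀ μ ν : G, μ ∈ G₁ → ν ∈ G₂ → f μ ν ≠ 0 := by
    intro μ ν hμ hν
    obtain ⟨χ₀, hχ₀⟩ := (hG₁mem μ).1 hμ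
    have hz := hval χ₀ ν hν
    rw [hχ₀] at hz
    intro hf
    rw [hf, mul_zero] at hz
    exact mul_ne_zero (hchnz χ₀ (-ν)) hKCnz hz.symm
  -- counting
  have hcard1 : (Fintype.card G : ℂ) = ((univ.filter (· ∈ G₁)).card : ℂ) * (KC : ℂ) := by
    have e1 : ∀ μ ∈ univ.filter (· ∈ G₁), (Fintype.card G : ℂ) * f μ 0 = (KC : ℂ) := by
      intro μ hμ
      rw [Finset.mem_filter] at hμ
      obtain ⟨χ₀, hχ₀⟩ := (hG₁mem μ).1 hμ.2
      have := hval χ₀ 0 (zero_mem G₂)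
      rw [hχ₀, neg_zero, AddChar.map_zero_eq_one, one_mul] at this
      exact this
    have e2 : ∑ μ ∈ univ.filter (· ∈ G₁), f μ 0 = 1 := by
      rw [Finset.sum_filter]
      have e3 : ∀ μ : G, (if μ ∈ G₁ then f μ 0 else 0) = f μ 0 := by
        intro μ
        by_cases hμ : μ ∈ G₁
        · rw [if_pos hμ]
        · rw [if_neg hμ, hsupp1 μ 0 hμ]
      rw [Finset.sum_congr rfl fun μ _ => e3 μ, h3 0, if_pos rfl]
    calc (Fintype.card G : ℂ) = (Fintype.card G : ℂ) * ∑ μ ∈ univ.filter (· ∈ G₁), f μ 0 := by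
          rw [e2, mul_one]
      _ = ∑ μ ∈ univ.filter (· ∈ G₁), (Fintype.card G : ℂ) * f μ 0 := Finset.mul_sum _ _ _
      _ = ∑ _μ ∈ univ.filter (· ∈ G₁), (KC : ℂ) := Finset.sum_congr rfl e1
      _ = ((univ.filter (· ∈ G₁)).card : ℂ) * (KC : ℂ) := by rw [Finset.sum_const]; simp
  have hcard2 : (Fintype.card G : ℂ) = ((univ.filter (· ∈ G₂)).card : ℂ) * (KC : ℂ) := by
    have e1 : ∀ ν ∈ univ.filter (· ∈ G₂), (Fintype.card G : ℂ) * f 0 ν = (KC : ℂ) := by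
      intro ν hν
      rw [Finset.mem_filter] at hν
      have := hval 0 ν hν.2
      rw [hM0, AddChar.zero_apply, one_mul] at this
      exact this
    have e2 : ∑ ν ∈ univ.filter (· ∈ G₂), f 0 ν = 1 := by
      rw [Finset.sum_filter]
      have e3 : ∀ ν : G, (if ν ∈ G₂ then f 0 ν else 0) = f 0 ν := by
        intro ν
        by_cases hν : ν ∈ G₂
        · rw [if_pos hν]
        · rw [if_neg hν, hsupp2 0 ν hν]
      rw [Finset.sum_congr rfl fun ν _ => e3 ν, h4 0, if_pos rfl]
    calc (Fintype.card G : ℂ) = (Fintype.card G : ℂ) * ∑ ν ∈ univ.filter (· ∈ G₂), f 0 ν := by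
          rw [e2, mul_one]
      _ = ∑ ν ∈ univ.filter (· ∈ G₂), (Fintype.card G : ℂ) * f 0 ν := Finset.mul_sum _ _ _
      _ = ∑ _ν ∈ univ.filter (· ∈ G₂), (KC : ℂ) := Finset.sum_congr rfl e1
      _ = ((univ.filter (· ∈ G₂)).card : ℂ) * (KC : ℂ) := by rw [Finset.sum_const]; simp
  have hcardeq : Nat.card G₁ = Nat.card G₂ := by
    have e1 : ((univ.filter (· ∈ G₁)).card : ℂ) = ((univ.filter (· ∈ G₂)).card : ℂ) :=
      mul_right_cancel₀ hKCnz (hcard1.symm.trans hcard2)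
    have e2 : (univ.filter (· ∈ G₁)).card = (univ.filter (· ∈ G₂)).card :=
      Nat.cast_injective e1
    rw [Nat.card_eq_fintype_card, Nat.card_eq_fintype_card,
      Fintype.card_of_subtype (univ.filter (· ∈ G₁)) (by simp),
      Fintype.card_of_subtype (univ.filter (· ∈ G₂)) (by simp), e2]

  -- cardinality of G₁ as Nat.card
  have hD1 : Nat.card G₁ = (univ.filter (· ∈ G₁)).card := by
    rw [Nat.card_eq_fintype_card, Fintype.card_of_subtype (univ.filter (· ∈ G₁)) (by simp)]
  have hDk : (Nat.card G₁ : ℂ) * (KC : ℂ) = (Fintype.card G : ℂ) := by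
    rw [hD1]; exact hcard1.symm
  have hDnz : (Nat.card G₁ : ℂ) ≠ 0 := by
    have : Nonempty G₁ := ⟨⟨0, zero_mem G₁⟩⟩
    exact Nat.cast_ne_zero.2 Nat.card_pos.ne'
  -- multiplicativity of f on the support
  have hfmul1 : ∀ μ μ' ν : G, μ ∈ G₁ → μ' ∈ G₁ → ν ∈ G₂ →
      f (μ + μ') ν = (Nat.card G₁ : ℂ) * (f μ ν * f μ' ν) := by
    intro μ μ' ν hμ hμ' hν
    obtain ⟨χ₀, hχ₀⟩ := (hG₁mem μ).1 hμ
    obtain ⟨χ₀', hχ₀'⟩ := (hG₁mem μ').1 hμ'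
    have E1 : (Fintype.card G : ℂ) * f μ ν = χ₀ (-ν) * (KC : ℂ) := by
      rw [← hχ₀]; exact hval χ₀ ν hν
    have E2 : (Fintype.card G : ℂ) * f μ' ν = χ₀' (-ν) * (KC : ℂ) := by
      rw [← hχ₀']; exact hval χ₀' ν hν
    have E3 : (Fintype.card G : ℂ) * f (μ + μ') ν = χ₀ (-ν) * χ₀' (-ν) * (KC : ℂ) := by
      have := hval (χ₀ + χ₀') ν hν
      rw [hMadd, hχ₀, hχ₀', AddChar.add_apply] at this
      exact this
    refine mul_left_cancel₀ (mul_ne_zero cardnz cardnz) ?_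
    calc (Fintype.card G : ℂ) * (Fintype.card G : ℂ) * f (μ + μ') ν
        = (Fintype.card G : ℂ) * ((Fintype.card G : ℂ) * f (μ + μ') ν) := by ring
      _ = ((Nat.card G₁ : ℂ) * (KC : ℂ)) * (χ₀ (-ν) * χ₀' (-ν) * (KC : ℂ)) := by
          rw [E3, hDk]
      _ = (Nat.card G₁ : ℂ) * ((χ₀ (-ν) * (KC : ℂ)) * (χ₀' (-ν) * (KC : ℂ))) := by ring
      _ = (Nat.card G₁ : ℂ) * (((Fintype.card G : ℂ) * f μ ν) * ((Fintype.card G : ℂ) * f μ' ν)) := by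
          rw [E1, E2]
      _ = (Fintype.card G : ℂ) * (Fintype.card G : ℂ) * ((Nat.card G₁ : ℂ) * (f μ ν * f μ' ν)) := by
          ring
  have hfmul2 : ∀ μ ν ν' : G, μ ∈ G₁ → ν ∈ G₂ → ν' ∈ G₂ →
      f μ (ν + ν') = (Nat.card G₁ : ℂ) * (f μ ν * f μ ν') := by
    intro μ ν ν' hμ hν hν'
    obtain ⟨χ₀, hχ₀⟩ := (hG₁mem μ).1 hμ
    have E1 : (Fintype.card G : ℂ) * f μ ν = χ₀ (-ν) * (KC : ℂ) := by
      rw [← hχ₀]; exact hval χ₀ ν hν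
    have E2 : (Fintype.card G : ℂ) * f μ ν' = χ₀ (-ν') * (KC : ℂ) := by
      rw [← hχ₀]; exact hval χ₀ ν' hν'
    have E3 : (Fintype.card G : ℂ) * f μ (ν + ν') = χ₀ (-ν) * χ₀ (-ν') * (KC : ℂ) := by
      have := hval χ₀ (ν + ν') (add_mem hν hν')
      rw [hχ₀, neg_add, AddChar.map_add_eq_mul] at this
      exact this
    refine mul_left_cancel₀ (mul_ne_zero cardnz cardnz) ?_
    calc (Fintype.card G : ℂ) * (Fintype.card G : ℂ) * f μ (ν + ν')
        = (Fintype.card G : ℂ) * ((Fintype.card G : ℂ) * f μ (ν + ν')) := by ring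
      _ = ((Nat.card G₁ : ℂ) * (KC : ℂ)) * (χ₀ (-ν) * χ₀ (-ν') * (KC : ℂ)) := by
          rw [E3, hDk]
      _ = (Nat.card G₁ : ℂ) * ((χ₀ (-ν) * (KC : ℂ)) * (χ₀ (-ν') * (KC : ℂ))) := by ring
      _ = (Nat.card G₁ : ℂ) * (((Fintype.card G : ℂ) * f μ ν) * ((Fintype.card G : ℂ) * f μ ν')) := by
          rw [E1, E2]
      _ = (Fintype.card G : ℂ) * (Fintype.card G : ℂ) * ((Nat.card G₁ : ℂ) * (f μ ν * f μ ν')) := by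
          ring
  -- N is contained in both subgroups
  have hf00 : f 0 0 ≠ 0 := fnz 0 0 (zero_mem G₁) (zero_mem G₂)
  have hNG₁ : N ≤ G₁ := by
    intro α hα
    by_contra hc
    have hz : f α 0 = 0 := hsupp1 α 0 hc
    have he : f α 0 = (σ α 0 : ℂ) * f 0 0 := by
      have := h0a 0 0 α hα
      rwa [zero_add] at this
    rw [hz] at he
    exact mul_ne_zero (Units.ne_zero _) hf00 he.symm
  have hNG₂ : N ≤ G₂ := by
    intro α hα
    by_contra hc
    have hz : f 0 α = 0 := hsupp2 0 α hc
    have he : f 0 α = (σ 0 α : ℂ) * f 0 0 := by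
      have := h0b 0 0 α hα
      rwa [zero_add] at this
    rw [hz] at he
    exact mul_ne_zero (Units.ne_zero _) hf00 he.symm
  -- the pairing h
  let hu : G → G → ℂˣ := fun μ ν =>
    if hc : μ ∈ G₁ ∧ ν ∈ G₂ then
      Units.mk0 ((Nat.card G₁ : ℂ) * (((σ μ ν)⁻¹ : ℂˣ) : ℂ) * f μ ν)
        (mul_ne_zero (mul_ne_zero hDnz (Units.ne_zero _)) (fnz μ ν hc.1 hc.2))
    else 1
  have huval : ∀ μ ν : G, μ ∈ G₁ → ν ∈ G₂ →
      (hu μ ν : ℂ) = (Nat.card G₁ : ℂ) * ((σ μ ν : ℂ))⁻¹ * f μ ν := by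
    intro μ ν hμ hν
    show ((dite _ _ _ : ℂˣ) : ℂ) = _
    rw [dif_pos ⟨hμ, hν⟩, Units.val_mk0, Units.val_inv_eq_inv_val]
  refine ⟨G₁, G₂, hu, hNG₁, hNG₂, hcardeq, ?_, ?_, ?_, ?_, ?_⟩
  · -- multiplicativity in the first variable
    intro μ μ' ν hμ hμ' hν
    apply Units.ext
    rw [Units.val_mul, huval _ _ (add_mem hμ hμ') hν, huval _ _ hμ hν, huval _ _ hμ' hν,
      hfmul1 μ μ' ν hμ hμ' hν, hσ1, Units.val_mul, mul_inv]
    ring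
  · -- multiplicativity in the second variable
    intro μ ν ν' hμ hν hν'
    apply Units.ext
    rw [Units.val_mul, huval _ _ hμ (add_mem hν hν'), huval _ _ hμ hν, huval _ _ hμ hν',
      hfmul2 μ ν ν' hμ hν hν', hσ2, Units.val_mul, mul_inv]
    ring
  · -- invariance under N-translations
    intro μ ν α hα hμ hν
    constructor
    · apply Units.ext
      rw [huval _ _ (add_mem hμ (hNG₁ hα)) hν, huval _ _ hμ hν,
        h0a μ ν α hα, hσ1, Units.val_mul, mul_inv]
      have s2 : (σ α ν : ℂ)⁻¹ * (σ α ν : ℂ) = 1 := inv_mul_cancel₀ (Units.ne_zero _)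
      linear_combination ((Nat.card G₁ : ℂ) * ((σ μ ν : ℂ))⁻¹ * f μ ν) * s2
    · apply Units.ext
      rw [huval _ _ hμ (add_mem hν (hNG₂ hα)), huval _ _ hμ hν,
        h0b μ ν α hα, hσ2, Units.val_mul, mul_inv]
      have s2 : (σ μ α : ℂ)⁻¹ * (σ μ α : ℂ) = 1 := inv_mul_cancel₀ (Units.ne_zero _)
      linear_combination ((Nat.card G₁ : ℂ) * ((σ μ ν : ℂ))⁻¹ * f μ ν) * s2
  · -- the value formula
    intro μ ν hμ hν
    rw [huval _ _ hμ hν]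
    have s1 : (σ μ ν : ℂ) * ((σ μ ν : ℂ))⁻¹ = 1 := mul_inv_cancel₀ (Units.ne_zero _)
    have s2 : ((Nat.card G₁ : ℂ))⁻¹ * (Nat.card G₁ : ℂ) = 1 := inv_mul_cancel₀ hDnz
    calc f μ ν = (((Nat.card G₁ : ℂ))⁻¹ * (Nat.card G₁ : ℂ)) *
          (((σ μ ν : ℂ)) * ((σ μ ν : ℂ))⁻¹) * f μ ν := by rw [s1, s2]; ring
      _ = ((Nat.card G₁ : ℂ))⁻¹ * (σ μ ν : ℂ) *
          ((Nat.card G₁ : ℂ) * ((σ μ ν : ℂ))⁻¹ * f μ ν) := by ring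
  · -- vanishing off the support
    intro μ ν hc
    by_cases hμ : μ ∈ G₁
    · refine hsupp2 μ ν fun hν => hc ⟨hμ, hν⟩
    · exact hsupp1 μ ν hμ
end

section
/- Let n ≥ 1, let P be an n × n integer matrix with det P = ±1, let S = diag(d₁,…,dₙ) with positive integers dᵢ, and let ℓ ≥ 1 be an integer. Set D_ℓ := diag(ℓ/gcd(ℓ,d₁),…,ℓ/gcd(ℓ,dₙ)). Then, as subgroups of ℤⁿ, the image lattice of the matrix P·S·Pᵀ intersected with ℓ·ℤⁿ equals the image lattice of P·S·D_ℓ; that is, (P S Pᵀ)·ℤⁿ ∩ ℓ·ℤⁿ = (P S D_ℓ)·ℤⁿ. -/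
/-- Key divisibility: if `d * t = ℓ * s` in `ℤ` then `ℓ / gcd ℓ d` divides `t`. -/
lemma stmt8_key {ℓ d : ℕ} (hℓ : 0 < ℓ) (hd : 0 < d) {t s : ℤ}
    (h : (d : ℤ) * t = (ℓ : ℤ) * s) : ((ℓ / Nat.gcd ℓ d : ℕ) : ℤ) ∣ t := by
  set g := Nat.gcd ℓ d with hg
  have hg0 : 0 < g := Nat.gcd_pos_of_pos_left d hℓ
  have hgl : g ∣ ℓ := Nat.gcd_dvd_left _ _
  have hgd : g ∣ d := Nat.gcd_dvd_right _ _
  have hcop : Nat.Coprime (ℓ / g) (d / g) := Nat.coprime_div_gcd_div_gcd hg0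
  have hcopZ : IsCoprime ((ℓ / g : ℕ) : ℤ) ((d / g : ℕ) : ℤ) := by
    rw [Int.isCoprime_iff_gcd_eq_one, Int.gcd_natCast_natCast]
    exact hcop
  have hdvd : ((ℓ / g : ℕ) : ℤ) ∣ ((d / g : ℕ) : ℤ) * t := by
    refine ⟨s, ?_⟩
    have hgZ : (g : ℤ) ≠ 0 := by exact_mod_cast hg0.ne'
    apply mul_left_cancel₀ hgZ
    have h1 : (g : ℤ) * ((d / g : ℕ) : ℤ) = (d : ℤ) := by
      exact_mod_cast Nat.mul_div_cancel' hgd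
    have h2 : (g : ℤ) * ((ℓ / g : ℕ) : ℤ) = (ℓ : ℤ) := by
      exact_mod_cast Nat.mul_div_cancel' hgl
    calc (g : ℤ) * (((d / g : ℕ) : ℤ) * t) = (d : ℤ) * t := by rw [← mul_assoc, h1]
      _ = (ℓ : ℤ) * s := h
      _ = (g : ℤ) * (((ℓ / g : ℕ) : ℤ) * s) := by rw [← mul_assoc, h2]
  exact hcopZ.dvd_of_dvd_mul_left hdvd

/-- `(P S Pᵀ)·ℤⁿ ∩ ℓ·ℤⁿ = (P S D_ℓ)·ℤⁿ` for `P` unimodular,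
`S = diag(d₁,…,dₙ)` with `dᵢ > 0`, and `D_ℓ = diag(ℓ/gcd(ℓ,dᵢ))`. -/
theorem stmt8 {n : ℕ} (hn : 1 ≤ n)
    (P : Matrix (Fin n) (Fin n) ℤ) (hP : P.det = 1 ∨ P.det = -1)
    (d : Fin n → ℕ) (hd : ∀ i, 0 < d i)
    (ℓ : ℕ) (hℓ : 1 ≤ ℓ) :
    Set.range ((P * Matrix.diagonal (fun i => (d i : ℤ)) * P.transpose).mulVec)
        ∩ Set.range (fun v : Fin n → ℤ => (ℓ : ℤ) • v)
      = Set.range ((P * Matrix.diagonal (fun i => (d i : ℤ)) *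
          Matrix.diagonal (fun i => ((ℓ / Nat.gcd ℓ (d i) : ℕ) : ℤ))).mulVec) := by
  set S : Matrix (Fin n) (Fin n) ℤ := Matrix.diagonal (fun i => (d i : ℤ)) with hS
  set e : Fin n → ℤ := fun i => ((ℓ / Nat.gcd ℓ (d i) : ℕ) : ℤ) with he
  set Dl : Matrix (Fin n) (Fin n) ℤ := Matrix.diagonal e with hDl
  have hPu : IsUnit P.det := by
    rcases hP with h | h <;> simp [h]
  haveI : Invertible P := P.invertibleOfIsUnitDet hPu
  haveI : Invertible P.transpose :=
    (Matrix.transposeInvertibleEquivInvertible P).symm ‹Invertible P›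
  -- lcm identity: d i * e i = ℓ * (d i / gcd ℓ (d i))
  have hlcm : ∀ i, (d i : ℤ) * e i = (ℓ : ℤ) * ((d i / Nat.gcd ℓ (d i) : ℕ) : ℤ) := by
    intro i
    have h1 : d i * (ℓ / Nat.gcd ℓ (d i)) = ℓ * (d i / Nat.gcd ℓ (d i)) := by
      rw [← Nat.mul_div_assoc _ (Nat.gcd_dvd_left ℓ (d i)), mul_comm (d i) ℓ,
        Nat.mul_div_assoc _ (Nat.gcd_dvd_right ℓ (d i))]
    simp only [he]
    exact_mod_cast h1
  ext x
  simp only [Set.mem_inter_iff, Set.mem_range]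
  constructor
  · rintro ⟨⟨v, hv⟩, ⟨w, hw⟩⟩
    set t : Fin n → ℤ := P.transpose.mulVec v with ht
    have hx : x = P.mulVec (S.mulVec t) := by
      rw [← hv, ht, Matrix.mulVec_mulVec, Matrix.mulVec_mulVec]
    have hQx : S.mulVec t = (ℓ : ℤ) • ((⅟P).mulVec w) := by
      have h3 : (⅟P).mulVec x = S.mulVec t := by
        rw [hx, Matrix.mulVec_mulVec, invOf_mul_self, Matrix.one_mulVec]
      rw [← h3, ← hw, Matrix.mulVec_smul]
    have hdvd : ∀ i, e i ∣ t i := by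
      intro i
      have h4 : (d i : ℤ) * t i = (ℓ : ℤ) * ((⅟P).mulVec w i) := by
        have := congrFun hQx i
        simpa [hS, Matrix.mulVec_diagonal] using this
      exact stmt8_key hℓ (hd i) h4
    refine ⟨fun i => t i / e i, ?_⟩
    have hDlu : Dl.mulVec (fun i => t i / e i) = t := by
      funext i
      rw [hDl, Matrix.mulVec_diagonal]
      exact Int.mul_ediv_cancel' (hdvd i)
    calc (P * S * Dl).mulVec (fun i => t i / e i)
        = (P * S).mulVec (Dl.mulVec (fun i => t i / e i)) := by
          rw [← Matrix.mulVec_mulVec]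
      _ = P.mulVec (S.mulVec t) := by rw [hDlu, ← Matrix.mulVec_mulVec]
      _ = x := hx.symm
  · rintro ⟨u, hu⟩
    constructor
    · refine ⟨(⅟P.transpose).mulVec (Dl.mulVec u), ?_⟩
      rw [← hu]
      have hcancel : P.transpose.mulVec ((⅟P.transpose).mulVec (Dl.mulVec u))
          = Dl.mulVec u := by
        rw [Matrix.mulVec_mulVec, mul_invOf_self, Matrix.one_mulVec]
      calc (P * S * P.transpose).mulVec ((⅟P.transpose).mulVec (Dl.mulVec u))
          = (P * S).mulVec (P.transpose.mulVec ((⅟P.transpose).mulVec (Dl.mulVec u))) :=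
            (Matrix.mulVec_mulVec _ _ _).symm
        _ = (P * S).mulVec (Dl.mulVec u) := by rw [hcancel]
        _ = (P * S * Dl).mulVec u := Matrix.mulVec_mulVec _ _ _
    · refine ⟨P.mulVec (fun i => ((d i / Nat.gcd ℓ (d i) : ℕ) : ℤ) * u i), ?_⟩
      have h5 : (S * Dl).mulVec u
          = (ℓ : ℤ) • (fun i => ((d i / Nat.gcd ℓ (d i) : ℕ) : ℤ) * u i) := by
        funext i
        rw [hS, hDl, Matrix.diagonal_mul_diagonal, Matrix.mulVec_diagonal]
        show (d i : ℤ) * e i * u i = (ℓ : ℤ) * (((d i / Nat.gcd ℓ (d i) : ℕ) : ℤ) * u i)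
        rw [hlcm i, mul_assoc]
      rw [← hu, mul_assoc, ← Matrix.mulVec_mulVec, h5, Matrix.mulVec_smul]
end

section
/- Let n ≥ 1, let A_R be a symmetric invertible n × n integer matrix, let P be an n × n integer matrix with det P = ±1, let S = diag(d₁,…,dₙ) with positive integers dᵢ, set A_Λ := P·S·Pᵀ, and let ℓ ≥ 1 be an integer. Set D_ℓ := diag(ℓ/gcd(ℓ,d₁),…,ℓ/gcd(ℓ,dₙ)). Then, as subgroups of ℚⁿ, A_R·ℤⁿ ∩ ℓ·(A_Λ⁻¹·A_R)ᵀ·ℤⁿ = A_R·(Pᵀ)⁻¹·D_ℓ·P⁻¹·ℤⁿ, where A_Λ⁻¹ and the other inverses are taken over ℚ. -/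
/-!
Put `N := A_R (Pᵀ)⁻¹`. Since `A_R` and `A_Λ` are symmetric, `ℓ (A_Λ⁻¹ A_R)ᵀ = N diag(ℓ/dᵢ) P⁻¹`,
while `A_R = N Pᵀ`; unimodular right factors do not change an image lattice, so the two lattices
are `N ℤⁿ` and `N diag(ℓ/dᵢ) ℤⁿ`. As `N` is injective, their intersection is the image under `N`
of `ℤⁿ ∩ diag(ℓ/dᵢ) ℤⁿ`, which splits into the coordinate intersections
`ℤ ∩ (ℓ/d) ℤ = (ℓ / gcd(ℓ, d)) ℤ`: with `g = gcd(ℓ, d)` the fraction `ℓ/d` is `(ℓ/g)/(d/g)` in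
lowest terms.
-/

/-- The image lattice `M·ℤⁿ ⊆ ℚⁿ` of a rational matrix `M`. -/
def imageLat {n : ℕ} (M : Matrix (Fin n) (Fin n) ℚ) : Set (Fin n → ℚ) :=
  {x | ∃ v : Fin n → ℤ, x = M.mulVec (fun i => (v i : ℚ))}

open Matrix AddSubgroup

theorem zmultiples_one_inf_zmultiples_div_of_isCoprime {a b : ℤ} (hab : IsCoprime a b)
    (hb : b ≠ 0) :
    zmultiples (1 : ℚ) ⊓ zmultiples ((a : ℚ) / b) = zmultiples (a : ℚ) := by
  have hbQ : (b : ℚ) ≠ 0 := by exact_mod_cast hb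
  ext x
  simp only [mem_inf, mem_zmultiples_iff, zsmul_eq_mul, mul_one]
  constructor
  · rintro ⟨⟨u, rfl⟩, k, hk⟩
    have hub : u * b = k * a := by
      rw [← mul_div_assoc, div_eq_iff hbQ] at hk
      exact_mod_cast hk.symm
    obtain ⟨w, rfl⟩ := hab.dvd_of_dvd_mul_right (Dvd.intro_left k hub.symm)
    exact ⟨w, by push_cast; ring⟩
  · rintro ⟨w, rfl⟩
    exact ⟨⟨w * a, by push_cast; ring⟩, w * b, by push_cast; field_simp⟩

theorem zmultiples_one_inf_zmultiples_div (ℓ : ℕ) {D : ℕ} (hD : D ≠ 0) :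
    zmultiples (1 : ℚ) ⊓ zmultiples ((ℓ : ℚ) / D) =
      zmultiples ((ℓ / ℓ.gcd D : ℕ) : ℚ) := by
  have hg : 0 < ℓ.gcd D := Nat.gcd_pos_of_pos_right ℓ (Nat.pos_of_ne_zero hD)
  have hgQ : (ℓ.gcd D : ℚ) ≠ 0 := by exact_mod_cast hg.ne'
  have hquot : (ℓ : ℚ) / D = ((ℓ / ℓ.gcd D : ℕ) : ℤ) / ((D / ℓ.gcd D : ℕ) : ℤ) := by
    simp only [Int.cast_natCast, Nat.cast_div (Nat.gcd_dvd_left ℓ D) hgQ,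
      Nat.cast_div (Nat.gcd_dvd_right ℓ D) hgQ]
    field_simp
  have hcop : IsCoprime ((ℓ / ℓ.gcd D : ℕ) : ℤ) ((D / ℓ.gcd D : ℕ) : ℤ) :=
    Nat.isCoprime_iff_coprime.mpr (Nat.coprime_div_gcd_div_gcd hg)
  have hne : ((D / ℓ.gcd D : ℕ) : ℤ) ≠ 0 := by
    exact_mod_cast (Nat.div_pos (Nat.gcd_le_right (m := ℓ) (n := D) (Nat.pos_of_ne_zero hD)) hg).ne'
  rw [hquot, zmultiples_one_inf_zmultiples_div_of_isCoprime hcop hne, Int.cast_natCast]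

section ImageLattice

variable {n : ℕ}

theorem mem_imageLat_diagonal {c x : Fin n → ℚ} :
    x ∈ imageLat (diagonal c) ↔ ∀ i, x i ∈ zmultiples (c i) := by
  simp only [imageLat, mem_zmultiples_iff, zsmul_eq_mul, funext_iff,
    mulVec_diagonal, mul_comm (c _)]
  constructor
  · rintro ⟨v, hv⟩ i
    exact ⟨v i, (hv i).symm⟩
  · intro h
    choose v hv using h
    exact ⟨v, fun i => (hv i).symm⟩

theorem imageLat_diagonal_inter_diagonal {a b c : Fin n → ℚ}
    (h : ∀ i, zmultiples (a i) ⊓ zmultiples (b i) = zmultiples (c i)) :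
    imageLat (diagonal a) ∩ imageLat (diagonal b) = imageLat (diagonal c) := by
  ext x
  simp only [Set.mem_inter_iff, mem_imageLat_diagonal, ← forall_and, ← h, mem_inf]

theorem imageLat_mul (N B : Matrix (Fin n) (Fin n) ℚ) :
    imageLat (N * B) = N.mulVec '' imageLat B := by
  ext x
  constructor
  · rintro ⟨v, rfl⟩
    exact ⟨_, ⟨v, rfl⟩, mulVec_mulVec _ _ _⟩
  · rintro ⟨_, ⟨v, rfl⟩, rfl⟩
    exact ⟨v, mulVec_mulVec _ _ _⟩

theorem imageLat_inter_mul {N C E : Matrix (Fin n) (Fin n) ℚ} (hN : N.det ≠ 0)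
    (h : imageLat 1 ∩ imageLat C = imageLat E) :
    imageLat N ∩ imageLat (N * C) = imageLat (N * E) := by
  have hinj : Function.Injective N.mulVec :=
    mulVec_injective_iff_isUnit.mpr ((isUnit_iff_isUnit_det N).mpr (Ne.isUnit hN))
  rw [← Matrix.mul_one N, imageLat_mul, imageLat_mul, Matrix.mul_one, imageLat_mul,
    ← Set.image_inter hinj, h]

theorem imageLat_mul_map_intCast (M : Matrix (Fin n) (Fin n) ℚ)
    {U : Matrix (Fin n) (Fin n) ℤ} (hU : IsUnit U.det) :
    imageLat (M * U.map ((↑) : ℤ → ℚ)) = imageLat M := by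
  have map_intCast_mulVec (v : Fin n → ℤ) :
      (U.map ((↑) : ℤ → ℚ)).mulVec (fun i => (v i : ℚ)) = fun i => (U.mulVec v i : ℚ) :=
    funext fun i => (RingHom.map_mulVec (Int.castRingHom ℚ) U v i).symm
  ext x
  constructor
  · rintro ⟨v, rfl⟩
    exact ⟨U.mulVec v, by rw [← mulVec_mulVec, map_intCast_mulVec]⟩
  · rintro ⟨v, rfl⟩
    refine ⟨U⁻¹.mulVec v, ?_⟩
    rw [← mulVec_mulVec, map_intCast_mulVec, mulVec_mulVec, mul_nonsing_inv U hU, one_mulVec]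

end ImageLattice

theorem Matrix.map_nonsing_inv {m R S : Type*} [Fintype m] [DecidableEq m] [CommRing R]
    [CommRing S] (f : R →+* S) {A : Matrix m m R} (hA : IsUnit A.det) :
    (A.map f)⁻¹ = A⁻¹.map f :=
  inv_eq_right_inv (by
    rw [← Matrix.map_mul, mul_nonsing_inv A hA, Matrix.map_one _ f.map_zero f.map_one])

theorem smul_transpose_inv_mul_of_isSymm {m K : Type*} [Fintype m] [DecidableEq m] [Field K]
    {A : Matrix m m K} (hA : A.IsSymm) (Q : Matrix m m K) {s : m → K} (hs : ∀ i, s i ≠ 0)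
    (c : K) :
    c • ((Q * diagonal s * Qᵀ)⁻¹ * A)ᵀ = A * Qᵀ⁻¹ * diagonal (fun i => c / s i) * Q⁻¹ := by
  have hdiag : c • (diagonal s)⁻¹ = diagonal (fun i => c / s i) := by
    rw [inv_eq_right_inv (B := diagonal fun i => (s i)⁻¹) (by simp [diagonal_mul_diagonal, hs]),
      ← diagonal_smul]
    simp only [div_eq_mul_inv]
    rfl
  rw [transpose_mul, hA.eq, transpose_nonsing_inv, transpose_mul, transpose_mul,
    transpose_transpose, diagonal_transpose, Matrix.mul_inv_rev, Matrix.mul_inv_rev, ← hdiag]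
  simp only [Matrix.mul_smul, Matrix.smul_mul, Matrix.mul_assoc]

theorem stmt9_general {n : ℕ}
    (AR : Matrix (Fin n) (Fin n) ℤ) (hARsymm : AR.transpose = AR)
    (hARinv : (AR.map ((↑) : ℤ → ℚ)).det ≠ 0)
    (P : Matrix (Fin n) (Fin n) ℤ) (hP : P.det = 1 ∨ P.det = -1)
    (d : Fin n → ℕ) (hd : ∀ i, 0 < d i)
    (ℓ : ℕ) :
    imageLat (AR.map ((↑) : ℤ → ℚ))
        ∩ imageLat ((ℓ : ℚ) •
            ((((P.map ((↑) : ℤ → ℚ)) * Matrix.diagonal (fun i => (d i : ℚ)) *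
                (P.map ((↑) : ℤ → ℚ)).transpose)⁻¹ *
              AR.map ((↑) : ℤ → ℚ)).transpose))
      = imageLat (AR.map ((↑) : ℤ → ℚ) * ((P.map ((↑) : ℤ → ℚ)).transpose)⁻¹ *
          Matrix.diagonal (fun i => ((ℓ / Nat.gcd ℓ (d i) : ℕ) : ℚ)) *
          (P.map ((↑) : ℤ → ℚ))⁻¹) := by
  have hPunit : IsUnit P.det := Int.isUnit_iff.mpr hP
  have hPTunit : IsUnit Pᵀ.det := by rwa [det_transpose]
  have hQTunit : IsUnit (P.map ((↑) : ℤ → ℚ))ᵀ.det := by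
    rw [← transpose_map]
    exact RingHom.map_det (Int.castRingHom ℚ) Pᵀ ▸ hPTunit.map _
  have hPinv : (P.map ((↑) : ℤ → ℚ))⁻¹ = P⁻¹.map (↑) :=
    Matrix.map_nonsing_inv (Int.castRingHom ℚ) hPunit
  have hdQ (i : Fin n) : (d i : ℚ) ≠ 0 := Nat.cast_ne_zero.mpr (hd i).ne'
  rw [smul_transpose_inv_mul_of_isSymm (IsSymm.map hARsymm _) _ hdQ, hPinv,
    imageLat_mul_map_intCast _ (isUnit_nonsing_inv_det P hPunit),
    imageLat_mul_map_intCast _ (isUnit_nonsing_inv_det P hPunit)]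
  have hAR : imageLat (AR.map ((↑) : ℤ → ℚ))
      = imageLat (AR.map ((↑) : ℤ → ℚ) * ((P.map ((↑) : ℤ → ℚ))ᵀ)⁻¹) := by
    rw [← imageLat_mul_map_intCast (AR.map _ * _) hPTunit, transpose_map, Matrix.mul_assoc,
      nonsing_inv_mul _ hQTunit, Matrix.mul_one]
  have hNdet : (AR.map ((↑) : ℤ → ℚ) * ((P.map ((↑) : ℤ → ℚ))ᵀ)⁻¹).det ≠ 0 := by
    rw [det_mul]
    exact mul_ne_zero hARinv (isUnit_nonsing_inv_det _ hQTunit).ne_zero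
  rw [hAR]
  refine imageLat_inter_mul hNdet ?_
  rw [← diagonal_one]
  exact imageLat_diagonal_inter_diagonal fun i => zmultiples_one_inf_zmultiples_div ℓ (hd i).ne'

/-- for `A_R` a symmetric invertible integer matrix,
`A_Λ = P S Pᵀ` with `P` unimodular and `S = diag(d₁,…,dₙ)`, `dᵢ > 0`, one has
`A_R·ℤⁿ ∩ ℓ·(A_Λ⁻¹A_R)ᵀ·ℤⁿ = A_R·(Pᵀ)⁻¹·D_ℓ·P⁻¹·ℤⁿ` with
`D_ℓ = diag(ℓ/gcd(ℓ,dᵢ))`, inverses taken over `ℚ`. -/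
theorem stmt9 {n : ℕ} (hn : 1 ≤ n)
    (AR : Matrix (Fin n) (Fin n) ℤ) (hARsymm : AR.transpose = AR)
    (hARinv : (AR.map ((↑) : ℤ → ℚ)).det ≠ 0)
    (P : Matrix (Fin n) (Fin n) ℤ) (hP : P.det = 1 ∨ P.det = -1)
    (d : Fin n → ℕ) (hd : ∀ i, 0 < d i)
    (ℓ : ℕ) (hℓ : 1 ≤ ℓ) :
    imageLat (AR.map ((↑) : ℤ → ℚ))
        ∩ imageLat ((ℓ : ℚ) •
            ((((P.map ((↑) : ℤ → ℚ)) * Matrix.diagonal (fun i => (d i : ℚ)) *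
                (P.map ((↑) : ℤ → ℚ)).transpose)⁻¹ *
              AR.map ((↑) : ℤ → ℚ)).transpose))
      = imageLat (AR.map ((↑) : ℤ → ℚ) * ((P.map ((↑) : ℤ → ℚ)).transpose)⁻¹ *
          Matrix.diagonal (fun i => ((ℓ / Nat.gcd ℓ (d i) : ℕ) : ℚ)) *
          (P.map ((↑) : ℤ → ℚ))⁻¹) :=
  stmt9_general AR hARsymm hARinv P hP d hd ℓ
end

section
/- Let G be a finite abelian group with subgroups G₁, G₂ of equal order D satisfying G₁ + G₂ = G, and let F: G₁ × G₂ → ℂˣ be a perfect pairing. Define f: G × G → ℂ by f(μ,ν) = D⁻¹·F(μ,ν) if μ ∈ G₁ and ν ∈ G₂, and f(μ,ν) = 0 otherwise, and define the matrix m: G × G → ℂ by m(μ,ν) = Σ_{μ',ν' ∈ G} f(μ−μ',ν−ν')·f(ν',μ'). Then m is invertible as a complex matrix indexed by G if and only if Rad₀ is trivial, where Rad₀ := {(μ₁,μ₂) ∈ G₁ × G₂ : μ₁ + μ₂ = 0 and Sym(F)((μ₁,μ₂),(ν₁,ν₂)) = 1 for all (ν₁,ν₂) ∈ G₁ × G₂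 with ν₁ + ν₂ = 0}. -/
/-!
Perfectness gives, for every character `χ` of `G`, unique `a(χ) ∈ G₁` and `b(χ) ∈ G₂` with
`F(a(χ), ·) = χ⁻¹` on `G₂` and `F(·, b(χ)) = χ⁻¹` on `G₁`. Orthogonality of characters on `G₂`
and on `G₁` (this is where `|G₁| = |G₂| = D` enters) shows that `m` maps `χ` to the indicator of
`s(χ) = a(χ) + b(χ)`. As the characters form a basis of `ℂ^G` and are as many as the points of
`G`, `m` is invertible iff `s` is injective. If `s(χ) = s(ψ)`, then
`(a(χ) - a(ψ), b(χ) - b(ψ))` lies in `Rad₀`; conversely, since `G = G₁ + G₂`, an element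
`(μ₁, μ₂)` of `Rad₀` glues to a character `η` with `a(η) = μ₁`, `b(η) = μ₂`, so `s(η) = 0 = s(1)`.
-/

open Finset Matrix

open Classical in
theorem AddSubgroup.sum_filter_mem_eq_ite {G R : Type*} [AddCommGroup G] [Fintype G]
    [CommRing R] [NoZeroDivisors R] (A : AddSubgroup G) [DecidablePred (· ∈ A)] (φ : G → R)
    (hφ : ∀ x ∈ A, ∀ y ∈ A, φ (x + y) = φ x * φ y) :
    ∑ x ∈ univ.filter (· ∈ A), φ x = if ∀ x ∈ A, φ x = 1 then (Nat.card A : R) else 0 := by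
  split_ifs with h
  · rw [sum_congr rfl fun x hx => h x (mem_filter.1 hx).2, sum_const, nsmul_one,
      Nat.card_eq_fintype_card, Fintype.card_subtype]
  · push Not at h
    obtain ⟨x₀, hx₀, hne⟩ := h
    have hshift : φ x₀ * ∑ x ∈ univ.filter (· ∈ A), φ x = ∑ x ∈ univ.filter (· ∈ A), φ x := by
      rw [mul_sum]
      exact sum_equiv (Equiv.addLeft x₀) (fun x => by simp [A.add_mem_cancel_left hx₀])
        fun x hx => (hφ _ hx₀ _ (mem_filter.1 hx).2).symm
    have : (φ x₀ - 1) * ∑ x ∈ univ.filter (· ∈ A), φ x = 0 := by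
      rw [sub_mul, hshift, one_mul, sub_self]
    exact (mul_eq_zero.1 this).resolve_left (sub_ne_zero.2 hne)

section Characters

variable {G : Type*} [AddCommGroup G] {A B : AddSubgroup G}

theorem AddChar.ext_of_sup_eq_top {R : Type*} [Monoid R] (hAB : A ⊔ B = ⊤) {χ ψ : AddChar G R}
    (hA : ∀ x ∈ A, χ x = ψ x) (hB : ∀ t ∈ B, χ t = ψ t) : χ = ψ := by
  ext g
  obtain ⟨x, hx, t, ht, rfl⟩ := AddSubgroup.mem_sup.1 (hAB ▸ AddSubgroup.mem_top g)
  rw [map_add_eq_mul, map_add_eq_mul, hA x hx, hB t ht]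

theorem AddChar.exists_eqOn_of_sup_eq_top {R : Type*} [CommMonoid R] (hAB : A ⊔ B = ⊤)
    (φ ψ : G → R) (hφ0 : φ 0 = 1) (hψ0 : ψ 0 = 1)
    (hφ : ∀ x ∈ A, ∀ x' ∈ A, φ (x + x') = φ x * φ x')
    (hψ : ∀ t ∈ B, ∀ t' ∈ B, ψ (t + t') = ψ t * ψ t')
    (hφψ : ∀ c ∈ A, c ∈ B → φ c = ψ c) :
    ∃ η : AddChar G R, (∀ x ∈ A, η x = φ x) ∧ (∀ t ∈ B, η t = ψ t) := by
  choose X hX T hT hXT using fun g => AddSubgroup.mem_sup.1 (hAB ▸ AddSubgroup.mem_top g)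
  -- two decompositions of `g` differ by an element `c` of `A ⊓ B`, where `φ` and `ψ` agree
  have hwd : ∀ g x t, x ∈ A → t ∈ B → x + t = g → φ (X g) * ψ (T g) = φ x * ψ t := by
    intro g x t hx ht hg
    have hc : x - X g = T g - t := by rw [sub_eq_sub_iff_add_eq_add, hg, add_comm, hXT]
    have hcA : x - X g ∈ A := A.sub_mem hx (hX g)
    have hcB : x - X g ∈ B := hc ▸ B.sub_mem (hT g) ht
    have hφx : φ x = φ (X g) * φ (x - X g) := by rw [← hφ _ (hX g) _ hcA, add_sub_cancel]
    have hψT : ψ (T g) = ψ t * ψ (x - X g) := by rw [← hψ _ ht _ hcB, hc, add_sub_cancel]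
    rw [hφx, hψT, hφψ _ hcA hcB, mul_assoc, mul_comm (ψ t)]
  refine ⟨{ toFun := fun g => φ (X g) * ψ (T g)
            map_zero_eq_one' := by
              rw [hwd 0 0 0 A.zero_mem B.zero_mem (add_zero 0), hφ0, hψ0, mul_one]
            map_add_eq_mul' := fun a b => by
              rw [hwd (a + b) _ _ (A.add_mem (hX a) (hX b)) (B.add_mem (hT a) (hT b))
                (by rw [add_add_add_comm, hXT, hXT]), hφ _ (hX a) _ (hX b), hψ _ (hT a) _ (hT b),
                mul_mul_mul_comm] }, fun x hx => ?_, fun t ht => ?_⟩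
  · simp only [AddChar.coe_mk]
    rw [hwd x x 0 hx B.zero_mem (add_zero x), hψ0, mul_one]
  · simp only [AddChar.coe_mk]
    rw [hwd t 0 t A.zero_mem ht (zero_add t), hφ0, one_mul]

end Characters

theorem Matrix.isUnit_iff_injective_of_mulVec_addChar {G : Type*} [AddCommGroup G] [Fintype G]
    [DecidableEq G] {M : Matrix G G ℂ} {s : AddChar G ℂ → G}
    (hM : ∀ χ : AddChar G ℂ, M *ᵥ ⇑χ = Pi.single (s χ) 1) : IsUnit M ↔ Function.Injective s := by
  refine ⟨fun hU χ ψ h => DFunLike.coe_injective ?_, fun hs => ?_⟩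
  · exact Matrix.mulVec_injective_iff_isUnit.2 hU (by rw [hM, hM, h])
  · obtain ⟨ξ, hξ⟩ := ((Fintype.bijective_iff_injective_and_card s).2
      ⟨hs, AddChar.card_eq⟩).surjective.hasRightInverse
    refine Matrix.mulVec_surjective_iff_isUnit.1 fun v => ⟨∑ g, v g • ⇑(ξ g), ?_⟩
    simp only [Matrix.mulVec_sum, Matrix.mulVec_smul, hM, hξ _, ← Pi.single_smul, smul_eq_mul,
      mul_one, univ_sum_single]

section Pairing

variable {G : Type*} [AddCommGroup G] {A B : AddSubgroup G} {F : G → G → ℂˣ}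

structure IsPerfectPairingOn (A B : AddSubgroup G) (F : G → G → ℂˣ) : Prop where
  map_add_left : ∀ x x' t : G, x ∈ A → x' ∈ A → t ∈ B → F (x + x') t = F x t * F x' t
  map_add_right : ∀ x t t' : G, x ∈ A → t ∈ B → t' ∈ B → F x (t + t') = F x t * F x t'
  eq_zero_of_left : ∀ x ∈ A, (∀ t ∈ B, F x t = 1) → x = 0
  eq_zero_of_right : ∀ t ∈ B, (∀ x ∈ A, F x t = 1) → t = 0

namespace IsPerfectPairingOn

theorem flip (hP : IsPerfectPairingOn A B F) : IsPerfectPairingOn B A fun t x => F x t :=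
  ⟨fun t t' x ht ht' hx => hP.map_add_right x t t' hx ht ht',
    fun t x x' ht hx hx' => hP.map_add_left x x' t hx hx' ht, hP.eq_zero_of_right,
    hP.eq_zero_of_left⟩

theorem map_sub_left (hP : IsPerfectPairingOn A B F) {x x' t : G} (hx : x ∈ A) (hx' : x' ∈ A)
    (ht : t ∈ B) : F (x - x') t = F x t / F x' t := by
  rw [eq_div_iff_mul_eq', ← hP.map_add_left _ _ _ (A.sub_mem hx hx') hx' ht, sub_add_cancel]

theorem map_zero_left (hP : IsPerfectPairingOn A B F) {t : G} (ht : t ∈ B) : F 0 t = 1 := by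
  rw [← sub_self 0, hP.map_sub_left A.zero_mem A.zero_mem ht, div_self']

theorem map_neg_left (hP : IsPerfectPairingOn A B F) {x t : G} (hx : x ∈ A) (ht : t ∈ B) :
    F (-x) t = (F x t)⁻¹ := by
  rw [← zero_sub, hP.map_sub_left A.zero_mem hx ht, hP.map_zero_left ht, one_div]

theorem map_sub_right (hP : IsPerfectPairingOn A B F) {x t t' : G} (hx : x ∈ A) (ht : t ∈ B)
    (ht' : t' ∈ B) : F x (t - t') = F x t / F x t' :=
  hP.flip.map_sub_left ht ht' hx

theorem map_zero_right (hP : IsPerfectPairingOn A B F) {x : G} (hx : x ∈ A) : F x 0 = 1 :=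
  hP.flip.map_zero_left hx

theorem map_neg_right (hP : IsPerfectPairingOn A B F) {x t : G} (hx : x ∈ A) (ht : t ∈ B) :
    F x (-t) = (F x t)⁻¹ :=
  hP.flip.map_neg_left ht hx

open Classical in
theorem sum_mul_addChar_eq_ite (hP : IsPerfectPairingOn A B F) [Fintype G]
    [DecidablePred (· ∈ B)] {x : G} (hx : x ∈ A) (χ : AddChar G ℂ) :
    ∑ t ∈ univ.filter (· ∈ B), (F x t : ℂ) * χ t =
      if ∀ t ∈ B, (F x t : ℂ) * χ t = 1 then (Nat.card B : ℂ) else 0 := by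
  refine B.sum_filter_mem_eq_ite _ fun t ht t' ht' => ?_
  rw [hP.map_add_right x t t' hx ht ht', AddChar.map_add_eq_mul, Units.val_mul, mul_mul_mul_comm]

open Classical in
theorem sum_left_eq_ite (hP : IsPerfectPairingOn A B F) [Fintype G] [DecidablePred (· ∈ A)]
    {t : G} (ht : t ∈ B) :
    ∑ x ∈ univ.filter (· ∈ A), (F x t : ℂ) = if t = 0 then (Nat.card A : ℂ) else 0 := by
  rw [A.sum_filter_mem_eq_ite _ fun x hx x' hx' => by
    rw [hP.map_add_left x x' t hx hx' ht, Units.val_mul]]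
  congr 1
  refine propext ⟨fun h => hP.eq_zero_of_right t ht fun x hx => Units.val_eq_one.1 (h x hx), ?_⟩
  rintro rfl x hx
  rw [hP.map_zero_right hx, Units.val_one]

-- Summed over `A × B`, `F x t * χ t` gives `|A| ≠ 0`, as the sums over `A` vanish for `t ≠ 0`;
-- a row `x` with nonzero sum is one where `F x · * χ` is trivial on `B`.
theorem exists_dual (hP : IsPerfectPairingOn A B F) [Finite G] (χ : AddChar G ℂ) :
    ∃ x ∈ A, ∀ t ∈ B, (F x t : ℂ) * χ t = 1 := by
  classical
  have := Fintype.ofFinite G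
  have htot : ∑ x ∈ univ.filter (· ∈ A), ∑ t ∈ univ.filter (· ∈ B), (F x t : ℂ) * χ t ≠ 0 :=
    calc ∑ x ∈ univ.filter (· ∈ A), ∑ t ∈ univ.filter (· ∈ B), (F x t : ℂ) * χ t
        = ∑ t ∈ univ.filter (· ∈ B), (∑ x ∈ univ.filter (· ∈ A), (F x t : ℂ)) * χ t := by
          rw [sum_comm]; simp_rw [sum_mul]
      _ = ∑ t ∈ univ.filter (· ∈ B), if t = 0 then (Nat.card A : ℂ) * χ t else 0 :=
          sum_congr rfl fun t ht => by
            rw [hP.sum_left_eq_ite (mem_filter.1 ht).2, ite_mul, zero_mul]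
      _ = Nat.card A := by rw [sum_ite_eq', if_pos (by simp), AddChar.map_zero_eq_one, mul_one]
      _ ≠ 0 := Nat.cast_ne_zero.2 Nat.card_pos.ne'
  obtain ⟨x, hx, hne⟩ := exists_ne_zero_of_sum_ne_zero htot
  rw [hP.sum_mul_addChar_eq_ite (mem_filter.1 hx).2] at hne
  exact ⟨x, (mem_filter.1 hx).2, of_not_not fun h => hne (if_neg h)⟩

theorem eq_of_mul_addChar_eq_one (hP : IsPerfectPairingOn A B F) {χ : AddChar G ℂ} {x x' : G}
    (hx : x ∈ A) (hx' : x' ∈ A) (h : ∀ t ∈ B, (F x t : ℂ) * χ t = 1)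
    (h' : ∀ t ∈ B, (F x' t : ℂ) * χ t = 1) : x = x' := by
  refine sub_eq_zero.1 (hP.eq_zero_of_left _ (A.sub_mem hx hx') fun t ht => ?_)
  rw [hP.map_sub_left hx hx' ht, div_eq_one]
  exact Units.ext (mul_right_cancel₀ (right_ne_zero_of_mul_eq_one (h t ht))
    ((h t ht).trans (h' t ht).symm))

noncomputable def leftDual (hP : IsPerfectPairingOn A B F) [Finite G] (χ : AddChar G ℂ) : G :=
  (hP.exists_dual χ).choose

variable [Finite G]

theorem leftDual_mem (hP : IsPerfectPairingOn A B F) (χ : AddChar G ℂ) : hP.leftDual χ ∈ A :=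
  (hP.exists_dual χ).choose_spec.1

theorem leftDual_mul_apply (hP : IsPerfectPairingOn A B F) (χ : AddChar G ℂ) :
    ∀ t ∈ B, (F (hP.leftDual χ) t : ℂ) * χ t = 1 :=
  (hP.exists_dual χ).choose_spec.2

theorem eq_leftDual (hP : IsPerfectPairingOn A B F) {χ : AddChar G ℂ} {x : G} (hx : x ∈ A)
    (h : ∀ t ∈ B, (F x t : ℂ) * χ t = 1) : x = hP.leftDual χ :=
  hP.eq_of_mul_addChar_eq_one hx (hP.leftDual_mem χ) h (hP.leftDual_mul_apply χ)

theorem leftDual_one (hP : IsPerfectPairingOn A B F) : hP.leftDual 1 = 0 :=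
  (hP.eq_leftDual A.zero_mem fun t ht => by
    rw [hP.map_zero_left ht, Units.val_one, AddChar.one_apply, one_mul]).symm

theorem apply_eq_of_leftDual_eq (hP : IsPerfectPairingOn A B F) {χ ψ : AddChar G ℂ}
    (h : hP.leftDual χ = hP.leftDual ψ) : ∀ t ∈ B, χ t = ψ t := fun t ht =>
  mul_left_cancel₀ (Units.ne_zero _)
    ((h ▸ hP.leftDual_mul_apply χ t ht).trans (hP.leftDual_mul_apply ψ t ht).symm)

end IsPerfectPairingOn

end Pairing

section Monodromy

variable {G : Type*} [AddCommGroup G] [Fintype G] [DecidableEq G]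

def monodromyMatrix (f : G → G → ℂ) : Matrix G G ℂ :=
  Matrix.of fun μ ν => ∑ μ' : G, ∑ ν' : G, f (μ - μ') (ν - ν') * f ν' μ'

theorem monodromyMatrix_mulVec_addChar {f : G → G → ℂ} {χ : AddChar G ℂ} {a b : G}
    (ha : ∀ x, ∑ t, f x t * χ t = if x = a then 1 else 0)
    (hb : ∀ y, ∑ x, f x y * χ x = if y = b then 1 else 0) :
    monodromyMatrix f *ᵥ ⇑χ = Pi.single (a + b) 1 := by
  have hshift : ∀ c ν', ∑ ν, f c (ν - ν') * χ ν = (if c = a then 1 else 0) * χ ν' := fun c ν' => by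
    rw [← ha, sum_mul]
    exact Fintype.sum_equiv (Equiv.subRight ν') _ _ fun ν => by
      rw [Equiv.subRight_apply, mul_assoc, ← AddChar.map_add_eq_mul, sub_add_cancel]
  ext μ
  calc (monodromyMatrix f *ᵥ ⇑χ) μ
      = ∑ μ', ∑ ν', (∑ ν, f (μ - μ') (ν - ν') * χ ν) * f ν' μ' := by
        simp only [mulVec, dotProduct, monodromyMatrix, of_apply, sum_mul]
        rw [sum_comm]
        exact sum_congr rfl fun μ' _ => by rw [sum_comm]; simp only [mul_right_comm]
    _ = ∑ μ', (if μ - μ' = a then 1 else 0) * (if μ' = b then 1 else 0) := by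
        simp only [hshift, ← hb, mul_sum, mul_assoc, mul_comm (χ _)]
    _ = (Pi.single (a + b) 1 : G → ℂ) μ := by
        rw [sum_eq_single_of_mem b (mem_univ b) fun μ' _ h => by rw [if_neg h, mul_zero],
          if_pos rfl, mul_one, Pi.single_apply]
        simp only [sub_eq_iff_eq_add]

end Monodromy

section Kernel

variable {G : Type*} [AddCommGroup G] (A B : AddSubgroup G) [DecidablePred (· ∈ A)]
  [DecidablePred (· ∈ B)] (D : ℕ) (F : G → G → ℂˣ)

noncomputable def pairingKernel : G → G → ℂ :=
  fun μ ν => if μ ∈ A ∧ ν ∈ B then (D : ℂ)⁻¹ * F μ ν else 0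

theorem pairingKernel_flip (μ ν : G) :
    pairingKernel B A D (fun t x => F x t) ν μ = pairingKernel A B D F μ ν := by
  simp only [pairingKernel, and_comm]

variable {A B D F} [Fintype G] [DecidableEq G]

theorem IsPerfectPairingOn.sum_pairingKernel_mul_addChar (hP : IsPerfectPairingOn A B F)
    (hB : Nat.card B = D) (χ : AddChar G ℂ) (x : G) :
    ∑ t, pairingKernel A B D F x t * χ t = if x = hP.leftDual χ then 1 else 0 := by
  by_cases hx : x ∈ A
  · have hsum : ∑ t, pairingKernel A B D F x t * χ t =
        (D : ℂ)⁻¹ * ∑ t ∈ univ.filter (· ∈ B), (F x t : ℂ) * χ t := by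
      rw [mul_sum, sum_filter]
      exact sum_congr rfl fun t _ => by
        by_cases ht : t ∈ B <;> simp [pairingKernel, hx, ht, mul_assoc]
    have hdual : (∀ t ∈ B, (F x t : ℂ) * χ t = 1) ↔ x = hP.leftDual χ :=
      ⟨hP.eq_leftDual hx, by rintro rfl; exact hP.leftDual_mul_apply χ⟩
    have hD : (D : ℂ) ≠ 0 := Nat.cast_ne_zero.2 (hB ▸ Nat.card_pos.ne')
    simp only [hsum, hP.sum_mul_addChar_eq_ite hx, hB, hdual, mul_ite, mul_zero, inv_mul_cancel₀ hD]
  · have hne : x ≠ hP.leftDual χ := fun h => hx (h ▸ hP.leftDual_mem χ)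
    simp [pairingKernel, hx, hne]

theorem IsPerfectPairingOn.monodromyMatrix_mulVec_addChar (hP : IsPerfectPairingOn A B F)
    (hA : Nat.card A = D) (hB : Nat.card B = D) (χ : AddChar G ℂ) :
    monodromyMatrix (pairingKernel A B D F) *ᵥ ⇑χ =
      Pi.single (hP.leftDual χ + hP.flip.leftDual χ) 1 :=
  _root_.monodromyMatrix_mulVec_addChar (hP.sum_pairingKernel_mul_addChar hB χ) fun y => by
    simpa only [pairingKernel_flip] using hP.flip.sum_pairingKernel_mul_addChar hA χ y

end Kernel

section RadZero

variable {G : Type*} [AddCommGroup G] {A B : AddSubgroup G} {F : G → G → ℂˣ}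

/-- Here `F μ₁ ν₂ * F ν₁ μ₂` is `Sym(F)((μ₁, μ₂), (ν₁, ν₂))`. -/
def TrivialRadZero (A B : AddSubgroup G) (F : G → G → ℂˣ) : Prop :=
  ∀ μ₁ μ₂ : G, μ₁ ∈ A → μ₂ ∈ B → μ₁ + μ₂ = 0 →
    (∀ ν₁ ν₂ : G, ν₁ ∈ A → ν₂ ∈ B → ν₁ + ν₂ = 0 → F μ₁ ν₂ * F ν₁ μ₂ = 1) → μ₁ = 0 ∧ μ₂ = 0

namespace IsPerfectPairingOn

variable [Finite G]

theorem leftDual_mul_flip_leftDual (hP : IsPerfectPairingOn A B F) (χ : AddChar G ℂ)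
    {ν₁ ν₂ : G} (h₁ : ν₁ ∈ A) (h₂ : ν₂ ∈ B) (hν : ν₁ + ν₂ = 0) :
    F (hP.leftDual χ) ν₂ * F ν₁ (hP.flip.leftDual χ) = 1 := by
  have e₁ := hP.leftDual_mul_apply χ ν₂ h₂
  have e₂ : (F ν₁ (hP.flip.leftDual χ) : ℂ) * χ ν₁ = 1 := hP.flip.leftDual_mul_apply χ ν₁ h₁
  have e₃ : χ ν₁ * χ ν₂ = 1 := by
    rw [← AddChar.map_add_eq_mul, hν, AddChar.map_zero_eq_one]
  refine Units.ext ?_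
  calc ((F (hP.leftDual χ) ν₂ * F ν₁ (hP.flip.leftDual χ) : ℂˣ) : ℂ)
      = F (hP.leftDual χ) ν₂ * F ν₁ (hP.flip.leftDual χ) * (χ ν₁ * χ ν₂) := by
        rw [e₃, mul_one, Units.val_mul]
    _ = (F (hP.leftDual χ) ν₂ * χ ν₂) * (F ν₁ (hP.flip.leftDual χ) * χ ν₁) := by ring
    _ = 1 := by rw [e₁, e₂, one_mul]

theorem injective_of_trivialRadZero (hP : IsPerfectPairingOn A B F) (hAB : A ⊔ B = ⊤)
    (hrad : TrivialRadZero A B F) :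
    Function.Injective fun χ => hP.leftDual χ + hP.flip.leftDual χ := by
  intro χ ψ (h : _ + _ = _ + _)
  obtain ⟨hx, hy⟩ := hrad (hP.leftDual χ - hP.leftDual ψ) (hP.flip.leftDual χ - hP.flip.leftDual ψ)
    (A.sub_mem (hP.leftDual_mem χ) (hP.leftDual_mem ψ))
    (B.sub_mem (hP.flip.leftDual_mem χ) (hP.flip.leftDual_mem ψ))
    (by rw [sub_add_sub_comm, h, sub_self]) fun ν₁ ν₂ h₁ h₂ hν => by
      rw [hP.map_sub_left (hP.leftDual_mem χ) (hP.leftDual_mem ψ) h₂,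
        hP.map_sub_right h₁ (hP.flip.leftDual_mem χ) (hP.flip.leftDual_mem ψ), div_mul_div_comm,
        hP.leftDual_mul_flip_leftDual χ h₁ h₂ hν, hP.leftDual_mul_flip_leftDual ψ h₁ h₂ hν, div_one]
  exact AddChar.ext_of_sup_eq_top hAB (hP.flip.apply_eq_of_leftDual_eq (sub_eq_zero.1 hy))
    (hP.apply_eq_of_leftDual_eq (sub_eq_zero.1 hx))

-- The radical condition on `(μ₁, μ₂)` is exactly the compatibility on `A ⊓ B` needed to glue
-- `x ↦ (F x μ₂)⁻¹` on `A` and `t ↦ (F μ₁ t)⁻¹` on `B` into a character `η` of `G`.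
theorem trivialRadZero_of_injective (hP : IsPerfectPairingOn A B F) (hAB : A ⊔ B = ⊤)
    (hinj : Function.Injective fun χ => hP.leftDual χ + hP.flip.leftDual χ) :
    TrivialRadZero A B F := by
  intro μ₁ μ₂ h₁ h₂ hμ hrad
  obtain ⟨η, hηA, hηB⟩ := AddChar.exists_eqOn_of_sup_eq_top hAB (fun x => (F x μ₂)⁻¹)
    (fun t => (F μ₁ t)⁻¹) (by rw [hP.map_zero_left h₂, inv_one])
    (by rw [hP.map_zero_right h₁, inv_one])
    (fun x hx x' hx' => by rw [hP.map_add_left x x' μ₂ hx hx' h₂, mul_inv])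
    (fun t ht t' ht' => by rw [hP.map_add_right μ₁ t t' h₁ ht ht', mul_inv])
    fun c hcA hcB => by
      have hc := hrad c (-c) hcA (B.neg_mem hcB) (add_neg_cancel c)
      rw [hP.map_neg_right h₁ hcB, inv_mul_eq_one] at hc
      rw [hc]
  set η' := (Units.coeHom ℂ).compAddChar η
  have hA : μ₁ = hP.leftDual η' := hP.eq_leftDual h₁ fun t ht => by
    simp [η', hηB t ht]
  have hB : μ₂ = hP.flip.leftDual η' := hP.flip.eq_leftDual h₂ fun x hx => by
    simp [η', hηA x hx]
  have h1 : η' = 1 := hinj (show _ + _ = _ + _ by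
    rw [← hA, ← hB, hμ, hP.leftDual_one, hP.flip.leftDual_one, add_zero])
  rw [hA, hB, h1, hP.leftDual_one, hP.flip.leftDual_one]
  exact ⟨rfl, rfl⟩

end IsPerfectPairingOn

end RadZero

/-- for a perfect pairing `F : G₁ × G₂ → ℂˣ` with `G₁ + G₂ = G`,
the monodromy matrix `m(μ,ν) = Σ_{μ',ν'} f(μ−μ',ν−ν')·f(ν',μ')` is invertible
iff `Rad₀` is trivial. -/
theorem stmt12 {G : Type*} [AddCommGroup G] [Fintype G] [DecidableEq G]
    (G₁ G₂ : AddSubgroup G) [DecidablePred (· ∈ G₁)] [DecidablePred (· ∈ G₂)]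
    (D : ℕ) (hD1 : Nat.card G₁ = D) (hD2 : Nat.card G₂ = D)
    (hsum : G₁ ⊔ G₂ = ⊤)
    (F : G → G → ℂˣ)
    (hF1 : ∀ μ μ' ν : G, μ ∈ G₁ → μ' ∈ G₁ → ν ∈ G₂ →
      F (μ + μ') ν = F μ ν * F μ' ν)
    (hF2 : ∀ μ ν ν' : G, μ ∈ G₁ → ν ∈ G₂ → ν' ∈ G₂ →
      F μ (ν + ν') = F μ ν * F μ ν')
    (hperfL : ∀ μ ∈ G₁, (∀ ν ∈ G₂, F μ ν = 1) → μ = 0)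
    (hperfR : ∀ ν ∈ G₂, (∀ μ ∈ G₁, F μ ν = 1) → ν = 0)
    (f : G → G → ℂ)
    (hf : ∀ μ ν : G, f μ ν =
      if μ ∈ G₁ ∧ ν ∈ G₂ then ((D : ℂ))⁻¹ * (F μ ν : ℂ) else 0) :
    IsUnit (Matrix.of fun μ ν : G => ∑ μ' : G, ∑ ν' : G,
        f (μ - μ') (ν - ν') * f ν' μ') ↔
      (∀ μ₁ μ₂ : G, μ₁ ∈ G₁ → μ₂ ∈ G₂ → μ₁ + μ₂ = 0 →
        (∀ ν₁ ν₂ : G, ν₁ ∈ G₁ → ν₂ ∈ G₂ → ν₁ + ν₂ = 0 →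
          F μ₁ ν₂ * F ν₁ μ₂ = 1) →
        μ₁ = 0 ∧ μ₂ = 0) := by
  have hP : IsPerfectPairingOn G₁ G₂ F := ⟨hF1, hF2, hperfL, hperfR⟩
  obtain rfl : f = pairingKernel G₁ G₂ D F := funext₂ hf
  rw [← monodromyMatrix,
    isUnit_iff_injective_of_mulVec_addChar (hP.monodromyMatrix_mulVec_addChar hD1 hD2)]
  exact ⟨hP.trivialRadZero_of_injective hsum, hP.injective_of_trivialRadZero hsum⟩
end

section
/- Let G be a finite abelian group with subgroups G₁, G₂ of equal order D, and let F: G₁ × G₂ → ℂˣ be a pairing. Define f: G × G → ℂ by f(μ,ν) = D⁻¹·F(μ,ν) if μ ∈ G₁ and ν ∈ G₂, and f(μ,ν) = 0 otherwise, and define the matrix m: G × G → ℂ by m(μ,ν) = Σ_{μ',ν' ∈ G} f(μ−μ',ν−ν')·f(ν',μ'). If m is invertible as a complex matrix indexed by G, then G₁ + G₂ = G. -/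
open Finset

/-- if the monodromy matrix
`m(μ,ν) = Σ_{μ',ν'} f(μ−μ',ν−ν')·f(ν',μ')` is invertible, then `G₁ + G₂ = G`. -/
theorem stmt13 {G : Type*} [AddCommGroup G] [Fintype G] [DecidableEq G]
    (G₁ G₂ : AddSubgroup G) [DecidablePred (· ∈ G₁)] [DecidablePred (· ∈ G₂)]
    (D : ℕ) (hD1 : Nat.card G₁ = D) (hD2 : Nat.card G₂ = D)
    (F : G → G → ℂˣ)
    (hF1 : ∀ μ μ' ν : G, μ ∈ G₁ → μ' ∈ G₁ → ν ∈ G₂ →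
      F (μ + μ') ν = F μ ν * F μ' ν)
    (hF2 : ∀ μ ν ν' : G, μ ∈ G₁ → ν ∈ G₂ → ν' ∈ G₂ →
      F μ (ν + ν') = F μ ν * F μ ν')
    (f : G → G → ℂ)
    (hf : ∀ μ ν : G, f μ ν =
      if μ ∈ G₁ ∧ ν ∈ G₂ then ((D : ℂ))⁻¹ * (F μ ν : ℂ) else 0)
    (hm : IsUnit (Matrix.of fun μ ν : G => ∑ μ' : G, ∑ ν' : G,
        f (μ - μ') (ν - ν') * f ν' μ')) :
    G₁ ⊔ G₂ = ⊤ := by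
  by_contra h
  obtain ⟨μ, hμ⟩ : ∃ μ : G, μ ∉ G₁ ⊔ G₂ := by
    by_contra h'
    push_neg at h'
    exact h (top_unique fun x _ => h' x)
  have hrow : ∀ ν, (Matrix.of fun μ ν : G => ∑ μ' : G, ∑ ν' : G,
      f (μ - μ') (ν - ν') * f ν' μ') μ ν = 0 := by
    intro ν
    simp only [Matrix.of_apply]
    apply Finset.sum_eq_zero; intro μ' _
    apply Finset.sum_eq_zero; intro ν' _
    rw [hf (μ - μ'), hf ν']
    by_cases h2 : μ' ∈ G₂
    · have h1 : ¬ (μ - μ' ∈ G₁ ∧ ν - ν' ∈ G₂) := by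
        rintro ⟨ha, _⟩
        have : μ = (μ - μ') + μ' := by abel
        rw [this] at hμ
        exact hμ (AddSubgroup.add_mem _
          (AddSubgroup.mem_sup_left ha) (AddSubgroup.mem_sup_right h2))
      simp [h1]
    · have h3 : ¬ (ν' ∈ G₁ ∧ μ' ∈ G₂) := fun hc => h2 hc.2
      simp [h3]
  rw [Matrix.isUnit_iff_isUnit_det] at hm
  rw [Matrix.det_eq_zero_of_row_eq_zero μ hrow] at hm
  exact hm.ne_zero rfl
end

section
/- Let G be a finite abelian group with subgroups G₁, G₂ of equal order D satisfying G₁ + G₂ = G, and let F: G₁ × G₂ → ℂˣ be a perfect pairing. Define f: G × G → ℂ by f(μ,ν) = D⁻¹·F(μ,ν) if μ ∈ G₁ and ν ∈ G₂, and 0 otherwise; define m(μ,ν) = Σ_{μ',ν' ∈ G} f(μ−μ',ν−ν')·f(ν',μ'); let Sym(F)((μ₁,μ₂),(ν₁,ν₂)) = F(μ₁,ν₂)·F(ν₁,μ₂); let (G₁×G₂)_λ := {(λ₁,λ₂) ∈ G₁×G₂ : λ₁+λ₂ = λ}; let Rad := {x ∈ G₁×G₂ : Sym(F)(x,y) = 1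 for all y ∈ (G₁×G₂)₀}; let Rad_λ := Rad ∩ (G₁×G₂)_λ and Rad₀ := Rad ∩ (G₁×G₂)₀. Then for all μ, ν ∈ G: if Rad_μ and Rad_ν are both nonempty, then for every choice of μ̃ ∈ Rad_μ and ν̃ ∈ Rad_ν one has m(μ,ν) = (|G₁ ∩ G₂|·|Rad₀|/D²)·Sym(F)(μ̃,ν̃) (in particular the value Sym(F)(μ̃,ν̃) is independent of the choices); and if Rad_μ = ∅ or Rad_ν = ∅, then m(μ,ν) = 0. -/
open Finset

/-- The symmetrization `Sym(F)` of a pairing. -/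
def SymPair {G : Type*} (F : G → G → ℂˣ) (p q : G × G) : ℂˣ :=
  F p.1 q.2 * F q.1 p.2

/-- The fiber `(G₁×G₂)_λ`. -/
def fiberSet {G : Type*} [AddCommGroup G] (G₁ G₂ : AddSubgroup G) (lam : G) :
    Set (G × G) :=
  {p | p.1 ∈ G₁ ∧ p.2 ∈ G₂ ∧ p.1 + p.2 = lam}

/-- The radical `Rad` of `Sym(F)` against the fiber over `0`. -/
def radSet {G : Type*} [AddCommGroup G] (G₁ G₂ : AddSubgroup G)
    (F : G → G → ℂˣ) : Set (G × G) :=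
  {p | p.1 ∈ G₁ ∧ p.2 ∈ G₂ ∧
    ∀ q ∈ fiberSet G₁ G₂ (0 : G), SymPair F p q = 1}

/-!
Both sums in `m(μ,ν)` run over fibres of the addition map `G₁ × G₂ → G`, so
`m(μ,ν) = D⁻² ∑_{x ∈ (G₁×G₂)_μ} ∑_{y ∈ (G₁×G₂)_ν} Sym(F)(x,y)`, and each fibre is a
coset `x₀ + K` of the kernel `K = (G₁×G₂)₀ ≅ G₁ ∩ G₂`. Summing over `x` first,
orthogonality of the character `Sym(F)(·,y)` on `K` gives `|K|·Sym(F)(x₀,y)` if `y ∈ Rad`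
and `0` otherwise. Hence the double sum is `|K|·∑_{y ∈ Rad_ν} Sym(F)(x₀,y)`: it vanishes
when `Rad_ν = ∅` (and, by symmetry, when `Rad_μ = ∅`), while for `x₀ = μ̃ ∈ Rad` every
term equals `Sym(F)(μ̃,ν̃)`, because `Rad_ν = ν̃ + Rad₀` and `Rad₀ ⊆ K`.
-/

section FiberSums

variable {M : Type*} [AddCommGroup M] [Fintype M]

theorem sum_filter_eq_sum_filter_add {β : Type*} [AddCommMonoid β] {p q : M → Prop}
    [DecidablePred p] [DecidablePred q] (x₀ : M) (hpq : ∀ k, p (x₀ + k) ↔ q k) (g : M → β) :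
    ∑ x with p x, g x = ∑ k with q k, g (x₀ + k) := by
  rw [sum_filter, sum_filter, ← Equiv.sum_comp (Equiv.addLeft x₀)]
  simp only [Equiv.coe_addLeft, hpq]

variable {R : Type*} [CommRing R] [IsDomain R]

theorem sum_addSubgroup_eq_zero_of_ne_one {K : AddSubgroup M} [DecidablePred (· ∈ K)] {ψ : M → R}
    (hψ : ∀ a b, ψ (a + b) = ψ a * ψ b) {z : M} (hz : z ∈ K) (hψz : ψ z ≠ 1) :
    ∑ k with k ∈ K, ψ k = 0 := by
  have hfix : ψ z * ∑ k with k ∈ K, ψ k = ∑ k with k ∈ K, ψ k := by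
    conv_rhs => rw [sum_filter_eq_sum_filter_add z (fun k => K.add_mem_cancel_left hz)]
    simp only [hψ, mul_sum]
  have hzero : (ψ z - 1) * ∑ k with k ∈ K, ψ k = 0 := by rw [sub_mul, hfix, one_mul, sub_self]
  exact (mul_eq_zero.1 hzero).resolve_left (sub_ne_zero.2 hψz)

def radical (K : AddSubgroup M) (B : M → M → R) : Set M :=
  {y | ∀ k ∈ K, B k y = 1}

variable {N : Type*} [AddCommGroup N] [DecidableEq N] (σ : M →+ N) {B : M → M → R}

theorem sum_fiber_eq_sum_ker {β : Type*} [AddCommMonoid β] {x₀ : M} {μ : N} (hx₀ : σ x₀ = μ)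
    (g : M → β) : ∑ x with σ x = μ, g x = ∑ k with k ∈ σ.ker, g (x₀ + k) :=
  sum_filter_eq_sum_filter_add x₀ (fun k => by simp [hx₀]) g

variable (hB : ∀ x x' y, B (x + x') y = B x y * B x' y)
include hB

theorem sum_fiber_eq_ite {x₀ : M} {μ : N} (hx₀ : σ x₀ = μ) (y : M)
    [Decidable (y ∈ radical σ.ker B)] :
    ∑ x with σ x = μ, B x y = if y ∈ radical σ.ker B then Nat.card σ.ker * B x₀ y else 0 := by
  simp only [sum_fiber_eq_sum_ker σ hx₀, hB, ← mul_sum]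
  split_ifs with hy
  · rw [sum_congr rfl fun k hk => hy k (mem_filter.1 hk).2, sum_const, nsmul_one,
      Nat.subtype_card _ fun k => mem_filter_univ k, mul_comm]
  · obtain ⟨z, hz, hBz⟩ : ∃ z ∈ σ.ker, B z y ≠ 1 := by simpa [radical] using hy
    rw [sum_addSubgroup_eq_zero_of_ne_one (fun a b => hB a b y) hz hBz, mul_zero]

variable [DecidablePred (· ∈ radical σ.ker B)]

theorem sum_fiber_sum_fiber_eq {x₀ : M} {μ : N} (hx₀ : σ x₀ = μ) (ν : N) :
    ∑ x with σ x = μ, ∑ y with σ y = ν, B x y =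
      Nat.card σ.ker * ∑ y with y ∈ radical σ.ker B ∧ σ y = ν, B x₀ y := by
  rw [sum_comm, mul_sum]
  simp only [sum_fiber_eq_ite σ hB hx₀, sum_ite, sum_const_zero, add_zero, filter_filter]
  exact sum_congr (by ext; simp [and_comm]) fun _ _ => rfl

variable (hBs : ∀ x y, B x y = B y x)
include hBs

theorem sum_fiber_sum_fiber_eq_of_mem_radical {μt νt : M} (hμt : μt ∈ radical σ.ker B)
    (hνt : νt ∈ radical σ.ker B) :
    ∑ x with σ x = σ μt, ∑ y with σ y = σ νt, B x y =
      Nat.card σ.ker * Nat.card ↥(radical σ.ker B ∩ σ ⁻¹' {0}) * B μt νt := by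
  have hB' : ∀ x y y', B x (y + y') = B x y * B x y' := fun x y y' => by
    rw [hBs, hB, hBs y, hBs y']
  have htrans : ∀ r, (νt + r ∈ radical σ.ker B ∧ σ (νt + r) = σ νt) ↔
      (r ∈ radical σ.ker B ∧ σ r = 0) := fun r => by
    have hrad : νt + r ∈ radical σ.ker B ↔ r ∈ radical σ.ker B :=
      forall₂_congr fun k hk => by rw [hB', hνt k hk, one_mul]
    rw [hrad, map_add, add_eq_left]
  have hconst : ∀ r ∈ σ.ker, B μt (νt + r) = B μt νt := fun r hr => by
    rw [hB', hBs μt r, hμt r hr, mul_one]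
  have hcard : #{r | r ∈ radical σ.ker B ∧ σ r = 0} = Nat.card ↥(radical σ.ker B ∩ σ ⁻¹' {0}) :=
    (Nat.subtype_card _ fun r => mem_filter_univ r).symm
  rw [sum_fiber_sum_fiber_eq σ hB rfl, sum_filter_eq_sum_filter_add νt htrans,
    sum_congr rfl fun r hr => hconst r (mem_filter.1 hr).2.2, sum_const, nsmul_eq_mul, hcard,
    mul_assoc]

theorem sum_fiber_sum_fiber_eq_zero (hσ : Function.Surjective σ) {μ ν : N}
    (h : radical σ.ker B ∩ σ ⁻¹' {μ} = ∅ ∨ radical σ.ker B ∩ σ ⁻¹' {ν} = ∅) :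
    ∑ x with σ x = μ, ∑ y with σ y = ν, B x y = 0 := by
  have hright : ∀ μ ν, radical σ.ker B ∩ σ ⁻¹' {ν} = ∅ →
      ∑ x with σ x = μ, ∑ y with σ y = ν, B x y = 0 := fun μ ν hν => by
    obtain ⟨x₀, hx₀⟩ := hσ μ
    rw [sum_fiber_sum_fiber_eq σ hB hx₀, sum_eq_zero, mul_zero]
    exact fun y hy => absurd (mem_filter.1 hy).2 (Set.eq_empty_iff_forall_notMem.1 hν y)
  rcases h with hμ | hν
  · rw [sum_comm]
    simpa only [hBs] using hright ν μ hμ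
  · exact hright μ ν hν

end FiberSums

section SubgroupPairs

variable {G : Type*} [AddCommGroup G] (G₁ G₂ : AddSubgroup G)

def addPairs : ↥G₁ × ↥G₂ →+ G := G₁.subtype.coprod G₂.subtype

theorem addPairs_apply (x : ↥G₁ × ↥G₂) : addPairs G₁ G₂ x = x.1 + x.2 := rfl

theorem addPairs_surjective (hsum : G₁ ⊔ G₂ = ⊤) : Function.Surjective (addPairs G₁ G₂) :=
  fun μ => by
    obtain ⟨a, b, hab⟩ := AddSubgroup.mem_sup'.1 (hsum ▸ AddSubgroup.mem_top μ)
    exact ⟨(a, b), hab⟩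

theorem card_ker_addPairs : Nat.card (addPairs G₁ G₂).ker = Nat.card ↥(G₁ ⊓ G₂) :=
  Nat.card_congr
    { toFun k := ⟨k.1.1, AddSubgroup.mem_inf.2 ⟨k.1.1.2,
        (eq_neg_of_add_eq_zero_left k.2 : (k.1.1 : G) = -k.1.2) ▸ neg_mem k.1.2.2⟩⟩
      invFun a :=
        ⟨(⟨a, (AddSubgroup.mem_inf.1 a.2).1⟩, ⟨-a, neg_mem (AddSubgroup.mem_inf.1 a.2).2⟩),
          add_neg_cancel (a : G)⟩
      left_inv k := Subtype.ext <| Prod.ext rfl <| Subtype.ext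
        (neg_eq_of_add_eq_zero_right k.2 : -(k.1.1 : G) = k.1.2)
      right_inv _ := rfl }

theorem sum_fiber_addPairs_eq_sum_fst [Fintype G] [DecidableEq G] [DecidablePred (· ∈ G₁)]
    [DecidablePred (· ∈ G₂)] {β : Type*} [AddCommMonoid β] (μ : G) (h : G → G → β) :
    ∑ x with addPairs G₁ G₂ x = μ, h x.1 x.2 =
      ∑ a, if a ∈ G₁ ∧ μ - a ∈ G₂ then h a (μ - a) else 0 := by
  have hsnd : ∀ x : ↥G₁ × ↥G₂, addPairs G₁ G₂ x = μ → (x.2 : G) = μ - x.1 := fun x hx => by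
    rw [← hx, addPairs_apply, add_sub_cancel_left]
  rw [← sum_filter]
  refine sum_bij (fun x _ => (x.1 : G)) (fun x hx => ?_) (fun x hx y hy hxy => ?_)
    (fun a ha => ?_) (fun x hx => ?_)
  · rw [mem_filter_univ, ← hsnd x ((mem_filter_univ x).1 hx)]
    exact ⟨x.1.2, x.2.2⟩
  · refine Prod.ext (Subtype.ext hxy) (Subtype.ext ?_)
    rw [hsnd x ((mem_filter_univ x).1 hx), hsnd y ((mem_filter_univ y).1 hy), hxy]
  · obtain ⟨ha₁, ha₂⟩ := (mem_filter_univ _).1 ha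
    exact ⟨(⟨a, ha₁⟩, ⟨μ - a, ha₂⟩), (mem_filter_univ _).2 (add_sub_cancel a μ), rfl⟩
  · rw [hsnd x ((mem_filter_univ x).1 hx)]

theorem sum_fiber_addPairs_eq_sum_snd [Fintype G] [DecidableEq G] [DecidablePred (· ∈ G₁)]
    [DecidablePred (· ∈ G₂)] {β : Type*} [AddCommMonoid β] (μ : G) (h : G → G → β) :
    ∑ x with addPairs G₁ G₂ x = μ, h x.1 x.2 =
      ∑ a, if μ - a ∈ G₁ ∧ a ∈ G₂ then h (μ - a) a else 0 := by
  rw [sum_fiber_addPairs_eq_sum_fst, ← Equiv.sum_comp (Equiv.subLeft μ)]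
  simp only [Equiv.subLeft_apply, sub_sub_cancel]

end SubgroupPairs

theorem symPair_comm {G : Type*} (F : G → G → ℂˣ) (p q : G × G) :
    SymPair F p q = SymPair F q p :=
  mul_comm _ _

section SubgroupPairing

variable {G : Type*} [AddCommGroup G] {G₁ G₂ : AddSubgroup G} (F : G → G → ℂˣ)

variable (G₁ G₂) in
def symPairOn (x y : ↥G₁ × ↥G₂) : ℂ :=
  SymPair F (Prod.map Subtype.val Subtype.val x) (Prod.map Subtype.val Subtype.val y)

theorem symPairOn_comm (x y : ↥G₁ × ↥G₂) : symPairOn G₁ G₂ F x y = symPairOn G₁ G₂ F y x :=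
  congrArg Units.val (symPair_comm F _ _)

theorem symPairOn_add_left
    (hF1 : ∀ μ μ' ν : G, μ ∈ G₁ → μ' ∈ G₁ → ν ∈ G₂ → F (μ + μ') ν = F μ ν * F μ' ν)
    (hF2 : ∀ μ ν ν' : G, μ ∈ G₁ → ν ∈ G₂ → ν' ∈ G₂ → F μ (ν + ν') = F μ ν * F μ ν')
    (x x' y : ↥G₁ × ↥G₂) :
    symPairOn G₁ G₂ F (x + x') y = symPairOn G₁ G₂ F x y * symPairOn G₁ G₂ F x' y := by
  simp only [symPairOn, SymPair, Prod.map_fst, Prod.map_snd, Prod.fst_add, Prod.snd_add,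
    AddSubgroup.coe_add, hF1 _ _ _ x.1.2 x'.1.2 y.2.2, hF2 _ _ _ y.1.2 x.2.2 x'.2.2, Units.val_mul]
  ring

theorem mem_radical_symPairOn_iff (x : ↥G₁ × ↥G₂) :
    x ∈ radical (addPairs G₁ G₂).ker (symPairOn G₁ G₂ F) ↔
      ∀ q ∈ fiberSet G₁ G₂ 0, SymPair F (Prod.map Subtype.val Subtype.val x) q = 1 := by
  constructor
  · rintro hx q ⟨hq₁, hq₂, hq⟩
    exact Units.ext <| (congrArg Units.val (symPair_comm F _ _)).trans
      (hx (⟨q.1, hq₁⟩, ⟨q.2, hq₂⟩) hq)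
  · intro hx k hk
    rw [symPairOn_comm, symPairOn, hx (Prod.map Subtype.val Subtype.val k) ⟨k.1.2, k.2.2, hk⟩,
      Units.val_one]

theorem radSet_inter_fiberSet_eq_image (lam : G) :
    radSet G₁ G₂ F ∩ fiberSet G₁ G₂ lam = Prod.map Subtype.val Subtype.val ''
      (radical (addPairs G₁ G₂).ker (symPairOn G₁ G₂ F) ∩ addPairs G₁ G₂ ⁻¹' {lam}) := by
  ext p
  constructor
  · rintro ⟨⟨h₁, h₂, hrad⟩, -, -, hp⟩
    exact ⟨(⟨p.1, h₁⟩, ⟨p.2, h₂⟩), ⟨(mem_radical_symPairOn_iff F _).2 hrad, hp⟩, rfl⟩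
  · rintro ⟨x, ⟨hx, hxlam⟩, rfl⟩
    exact ⟨⟨x.1.2, x.2.2, (mem_radical_symPairOn_iff F x).1 hx⟩, x.1.2, x.2.2, hxlam⟩

theorem sum_sum_mul_swap_eq_sum_fiber_sum_fiber [Fintype G] [DecidableEq G]
    [DecidablePred (· ∈ G₁)] [DecidablePred (· ∈ G₂)] (D : ℕ) (f : G → G → ℂ)
    (hf : ∀ μ ν : G, f μ ν = if μ ∈ G₁ ∧ ν ∈ G₂ then ((D : ℂ))⁻¹ * (F μ ν : ℂ) else 0)
    (μ ν : G) :
    ∑ μ' : G, ∑ ν' : G, f (μ - μ') (ν - ν') * f ν' μ' =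
      ((D : ℂ) ^ 2)⁻¹ * ∑ x with addPairs G₁ G₂ x = μ, ∑ y with addPairs G₁ G₂ y = ν,
        symPairOn G₁ G₂ F x y := by
  have hterm : ∀ μ' ν', f (μ - μ') (ν - ν') * f ν' μ' =
      if μ - μ' ∈ G₁ ∧ μ' ∈ G₂ then
        (if ν' ∈ G₁ ∧ ν - ν' ∈ G₂ then
          ((D : ℂ) ^ 2)⁻¹ * SymPair F (μ - μ', μ') (ν', ν - ν') else 0) else 0 := by
    intro μ' ν'
    rw [hf, hf, SymPair, Units.val_mul]
    split_ifs <;> first | ring1 | (exfalso; tauto)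
  simp only [mul_sum, hterm]
  refine Eq.trans ?_ (sum_fiber_addPairs_eq_sum_snd G₁ G₂ μ fun a b =>
    ∑ y with addPairs G₁ G₂ y = ν, ((D : ℂ) ^ 2)⁻¹ *
      (SymPair F (a, b) (Prod.map Subtype.val Subtype.val y) : ℂ)).symm
  refine sum_congr rfl fun μ' _ => ?_
  split_ifs
  · exact (sum_fiber_addPairs_eq_sum_fst G₁ G₂ ν fun b c =>
      ((D : ℂ) ^ 2)⁻¹ * (SymPair F (μ - μ', μ') (b, c) : ℂ)).symm
  · exact sum_const_zero

end SubgroupPairing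

theorem stmt14_general {G : Type*} [AddCommGroup G] [Fintype G]
    (G₁ G₂ : AddSubgroup G) [DecidablePred (· ∈ G₁)] [DecidablePred (· ∈ G₂)]
    (D : ℕ)
    (hsum : G₁ ⊔ G₂ = ⊤)
    (F : G → G → ℂˣ)
    (hF1 : ∀ μ μ' ν : G, μ ∈ G₁ → μ' ∈ G₁ → ν ∈ G₂ →
      F (μ + μ') ν = F μ ν * F μ' ν)
    (hF2 : ∀ μ ν ν' : G, μ ∈ G₁ → ν ∈ G₂ → ν' ∈ G₂ →
      F μ (ν + ν') = F μ ν * F μ ν')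
    (f : G → G → ℂ)
    (hf : ∀ μ ν : G, f μ ν =
      if μ ∈ G₁ ∧ ν ∈ G₂ then ((D : ℂ))⁻¹ * (F μ ν : ℂ) else 0) :
    ∀ μ ν : G,
      (∀ μt ∈ radSet G₁ G₂ F ∩ fiberSet G₁ G₂ μ,
       ∀ νt ∈ radSet G₁ G₂ F ∩ fiberSet G₁ G₂ ν,
        (∑ μ' : G, ∑ ν' : G, f (μ - μ') (ν - ν') * f ν' μ')
          = ((Nat.card ↥(G₁ ⊓ G₂) : ℂ) *
              (Nat.card ↥(radSet G₁ G₂ F ∩ fiberSet G₁ G₂ (0 : G)) : ℂ) /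
              (D : ℂ) ^ 2) * (SymPair F μt νt : ℂ)) ∧
      ((radSet G₁ G₂ F ∩ fiberSet G₁ G₂ μ = ∅ ∨
        radSet G₁ G₂ F ∩ fiberSet G₁ G₂ ν = ∅) →
        (∑ μ' : G, ∑ ν' : G, f (μ - μ') (ν - ν') * f ν' μ') = 0) := by
  classical
  intro μ ν
  have hB := symPairOn_add_left F hF1 hF2
  have hBs := symPairOn_comm (G₁ := G₁) (G₂ := G₂) F
  simp only [sum_sum_mul_swap_eq_sum_fiber_sum_fiber F D f hf, radSet_inter_fiberSet_eq_image]
  refine ⟨?_, fun hempty => ?_⟩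
  · rintro _ ⟨x, ⟨hx, rfl⟩, rfl⟩ _ ⟨y, ⟨hy, rfl⟩, rfl⟩
    rw [sum_fiber_sum_fiber_eq_of_mem_radical _ hB hBs hx hy, card_ker_addPairs,
      Nat.card_image_of_injective (Subtype.val_injective.prodMap Subtype.val_injective), symPairOn]
    ring
  · simp only [Set.image_eq_empty] at hempty
    rw [sum_fiber_sum_fiber_eq_zero _ hB hBs (addPairs_surjective G₁ G₂ hsum) hempty, mul_zero]

/-- closed formula for the monodromy matrix entries
`m(μ,ν) = Σ_{μ',ν'} f(μ−μ',ν−ν')·f(ν',μ')`: they equal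
`(|G₁∩G₂|·|Rad₀|/D²)·Sym(F)(μ̃,ν̃)` for any `μ̃ ∈ Rad_μ`, `ν̃ ∈ Rad_ν` when both
are nonempty, and `0` otherwise. -/
theorem stmt14 {G : Type*} [AddCommGroup G] [Fintype G] [DecidableEq G]
    (G₁ G₂ : AddSubgroup G) [DecidablePred (· ∈ G₁)] [DecidablePred (· ∈ G₂)]
    (D : ℕ) (hD1 : Nat.card G₁ = D) (hD2 : Nat.card G₂ = D)
    (hsum : G₁ ⊔ G₂ = ⊤)
    (F : G → G → ℂˣ)
    (hF1 : ∀ μ μ' ν : G, μ ∈ G₁ → μ' ∈ G₁ → ν ∈ G₂ →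
      F (μ + μ') ν = F μ ν * F μ' ν)
    (hF2 : ∀ μ ν ν' : G, μ ∈ G₁ → ν ∈ G₂ → ν' ∈ G₂ →
      F μ (ν + ν') = F μ ν * F μ ν')
    (hperfL : ∀ μ ∈ G₁, (∀ ν ∈ G₂, F μ ν = 1) → μ = 0)
    (hperfR : ∀ ν ∈ G₂, (∀ μ ∈ G₁, F μ ν = 1) → ν = 0)
    (f : G → G → ℂ)
    (hf : ∀ μ ν : G, f μ ν =
      if μ ∈ G₁ ∧ ν ∈ G₂ then ((D : ℂ))⁻¹ * (F μ ν : ℂ) else 0) :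
    ∀ μ ν : G,
      (∀ μt ∈ radSet G₁ G₂ F ∩ fiberSet G₁ G₂ μ,
       ∀ νt ∈ radSet G₁ G₂ F ∩ fiberSet G₁ G₂ ν,
        (∑ μ' : G, ∑ ν' : G, f (μ - μ') (ν - ν') * f ν' μ')
          = ((Nat.card ↥(G₁ ⊓ G₂) : ℂ) *
              (Nat.card ↥(radSet G₁ G₂ F ∩ fiberSet G₁ G₂ (0 : G)) : ℂ) /
              (D : ℂ) ^ 2) * (SymPair F μt νt : ℂ)) ∧
      ((radSet G₁ G₂ F ∩ fiberSet G₁ G₂ μ = ∅ ∨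
        radSet G₁ G₂ F ∩ fiberSet G₁ G₂ ν = ∅) →
        (∑ μ' : G, ∑ ν' : G, f (μ - μ') (ν - ν') * f ν' μ') = 0) :=
  stmt14_general G₁ G₂ D hsum F hF1 hF2 f hf
end
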